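/- arXiv:0811.2102 — 5 statements merged into one kernel-verified Lean document; each statement's English description precedes it below -/
import Mathlib

section
/- (Khintchine's transference principle.) For every real number ω with 0 < ω < ω_{n−1}(Θ) one has ω_0(Θ) ≥ ω/((n−1)ω + n); moreover, if ω_{n−1}(Θ) is finite then ω_0(Θ) ≤ (ω_{n−1}(Θ) − n + 1)/n. In particular ω_{n−1}(Θ)/((n−1)ω_{n−1}(Θ) + n) ≤ ω_0(Θ) ≤ (ω_{n−1}(Θ) − n + 1)/n. -/
open scoped BigOperators Pointwise

noncomputable section

/-- Coordinates of a degree-`r` multivector in `Λ^r(ℝ^{n+1})`, with respect to the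
orthonormal basis formed by the wedge products `e_{i₁} ∧ ⋯ ∧ e_{i_r}` (`i₁ < ⋯ < i_r`)
of the standard basis vectors. -/
abbrev MultiVec (n r : ℕ) := {S : Finset (Fin (n + 1)) // S.card = r} → ℝ

/-- The Euclidean norm of a multivector. -/
def mvNorm {n r : ℕ} (X : MultiVec n r) : ℝ :=
  Real.sqrt (∑ S, X S ^ 2)

/-- The Euclidean norm of a vector of `ℝ^{n+1}`. -/
def vNorm {n : ℕ} (x : Fin (n + 1) → ℝ) : ℝ :=
  Real.sqrt (∑ i, x i ^ 2)

/-- A multivector is integral if all its coordinates (in the basis of wedge products of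
standard basis vectors) are integers; this encodes `X ∈ Λ^r(ℤ^{n+1})`. -/
def mvIntegral {n r : ℕ} (X : MultiVec n r) : Prop :=
  ∀ S, ∃ k : ℤ, X S = (k : ℝ)

/-- The wedge product `y ∧ X` of a vector `y ∈ ℝ^{n+1}` with a degree-`r` multivector `X`,
in coordinates. -/
def vWedge {n r : ℕ} (y : Fin (n + 1) → ℝ) (X : MultiVec n r) : MultiVec n (r + 1) :=
  fun T => ∑ i ∈ T.1.attach,
    (-1 : ℝ) ^ (T.1.filter (· < i.1)).card * y i.1 *
      X ⟨T.1.erase i.1, by rw [Finset.card_erase_of_mem i.2, T.2]; omega⟩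

/-- A vector of `ℝ^{n+1}` viewed as a degree-one multivector. -/
def vecToMulti {n : ℕ} (x : Fin (n + 1) → ℝ) : MultiVec n 1 :=
  fun S => ∑ i ∈ S.1, x i

/-- The wedge product `x 0 ∧ ⋯ ∧ x r` of `r` vectors of `ℝ^{n+1}`; its coordinate at an
`r`-element subset `S` is the corresponding `r × r` minor of the matrix whose columns are
the `x j`. -/
def multiWedge {n r : ℕ} (x : Fin r → Fin (n + 1) → ℝ) : MultiVec n r :=
  fun S => Matrix.det (Matrix.of fun a b : Fin r => x b ((S.1.orderIsoOfFin S.2 a : Fin (n + 1))))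

/-- The contraction (internal product) `y ⌟ Z` of a degree-`(r+1)` multivector `Z` by a
vector `y ∈ ℝ^{n+1}`: the unique degree-`r` multivector satisfying
`W · (y ⌟ Z) = (W ∧ y) · Z` for every degree-`r` multivector `W`, written in coordinates. -/
def vContract {n r : ℕ} (y : Fin (n + 1) → ℝ) (Z : MultiVec n (r + 1)) : MultiVec n r :=
  fun S => ∑ i ∈ (S.1ᶜ).attach,
    (-1 : ℝ) ^ (S.1.filter (fun j => i.1 < j)).card * y i.1 *
      Z ⟨insert i.1 S.1, by
        rw [Finset.card_insert_of_notMem (Finset.mem_compl.mp i.2), S.2]⟩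

/-- The point `y = (1, θ₁, …, θₙ) ∈ ℝ^{n+1}` of homogeneous coordinates of `Θ ∈ ℝⁿ`. -/
def yTheta {n : ℕ} (θ : Fin n → ℝ) : Fin (n + 1) → ℝ :=
  Fin.cons 1 θ

/-- The exponent `ω_d(Θ)`: the supremum (in `ℝ ∪ {±∞}`) of the real numbers `ω` for which
there exist infinitely many nonzero integer multivectors `X ∈ Λ^{d+1}(ℤ^{n+1})` with
`|y ∧ X| ≤ |X|^{-ω}`. -/
def omegaExp (n : ℕ) (θ : Fin n → ℝ) (d : ℕ) : EReal :=
  sSup {w : EReal | ∃ ω : ℝ, w = (ω : EReal) ∧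
    {X : MultiVec n (d + 1) | mvIntegral X ∧ X ≠ 0 ∧
      mvNorm (vWedge (yTheta θ) X) ≤ mvNorm X ^ (-ω)}.Infinite}

/-- `max_{0 ≤ i ≤ n} |x_i|` of an integer tuple, as a real number. -/
def maxAbs {n : ℕ} (x : Fin (n + 1) → ℤ) : ℝ :=
  ((Finset.univ.sup (fun i => (x i).natAbs) : ℕ) : ℝ)

/-- `ω_0(Θ)` (Definition 1): the supremum (in `ℝ ∪ {±∞}`) of the real numbers `ω` for
which there exist infinitely many integer `(n+1)`-tuples `(x₀, …, xₙ)` with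
`max_{1 ≤ i ≤ n} |x₀ θ_i - x_i| ≤ (max_{0 ≤ i ≤ n} |x_i|)^{-ω}`. -/
def omega0T (n : ℕ) (θ : Fin n → ℝ) : EReal :=
  sSup {w : EReal | ∃ ω : ℝ, w = (ω : EReal) ∧
    {x : Fin (n + 1) → ℤ |
      ∀ i : Fin n, |(x 0 : ℝ) * θ i - (x i.succ : ℝ)| ≤ maxAbs x ^ (-ω)}.Infinite}

/-- `ω_{n-1}(Θ)` (Definition 1): the supremum (in `ℝ ∪ {±∞}`) of the real numbers `ω` for
which there exist infinitely many integer `(n+1)`-tuples `(x₀, …, xₙ)` with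
`|x₀ + x₁θ₁ + ⋯ + xₙθₙ| ≤ (max_{0 ≤ i ≤ n} |x_i|)^{-ω}`. -/
def omegaLastT (n : ℕ) (θ : Fin n → ℝ) : EReal :=
  sSup {w : EReal | ∃ ω : ℝ, w = (ω : EReal) ∧
    {x : Fin (n + 1) → ℤ |
      |(x 0 : ℝ) + ∑ i : Fin n, (x i.succ : ℝ) * θ i| ≤ maxAbs x ^ (-ω)}.Infinite}

/-- `ω̂_0(Θ)` (Definition 2). -/
def omegaHat0 (n : ℕ) (θ : Fin n → ℝ) : EReal :=
  sSup {w : EReal | ∃ ω : ℝ, w = (ω : EReal) ∧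
    ∀ᶠ X : ℝ in Filter.atTop, ∃ x : Fin (n + 1) → ℤ, x ≠ 0 ∧
      (∀ j, |(x j : ℝ)| ≤ X) ∧
      ∀ i : Fin n, |(x 0 : ℝ) * θ i - (x i.succ : ℝ)| ≤ X ^ (-ω)}

/-- `ω̂_{n-1}(Θ)` (Definition 2). -/
def omegaHatLast (n : ℕ) (θ : Fin n → ℝ) : EReal :=
  sSup {w : EReal | ∃ ω : ℝ, w = (ω : EReal) ∧
    ∀ᶠ X : ℝ in Filter.atTop, ∃ x : Fin (n + 1) → ℤ, x ≠ 0 ∧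
      (∀ j, |(x j : ℝ)| ≤ X) ∧
      |(x 0 : ℝ) + ∑ i : Fin n, (x i.succ : ℝ) * θ i| ≤ X ^ (-ω)}

/-- The `r`-th compound of a subset `C` of `ℝ^{n+1}`: the convex hull in `Λ^r(ℝ^{n+1})`
of the wedge products `z₁ ∧ ⋯ ∧ z_r` of `r` elements of `C`. -/
def compoundBody {n : ℕ} (r : ℕ) (C : Set (Fin (n + 1) → ℝ)) : Set (MultiVec n r) :=
  convexHull ℝ {Z | ∃ z : Fin r → Fin (n + 1) → ℝ, (∀ j, z j ∈ C) ∧ Z = multiWedge z}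

/-- The `k`-th successive minimum of a subset `C` of `ℝ^{n+1}` with respect to the lattice
`ℤ^{n+1}`: the infimum of the `λ > 0` such that `λ • C` contains `k` linearly independent
integer points. -/
def succMin (n : ℕ) (C : Set (Fin (n + 1) → ℝ)) (k : ℕ) : ℝ :=
  sInf {lam : ℝ | 0 < lam ∧ ∃ v : Fin k → Fin (n + 1) → ℤ,
    LinearIndependent ℝ (fun j => fun i => ((v j i : ℝ))) ∧
    ∀ j, (fun i => ((v j i : ℝ))) ∈ lam • C}

/-!
Write `L(u) = u₀ + u₁θ₁ + ⋯ + uₙθₙ` and `D(y) = (y₀θᵢ - yᵢ)ᵢ`. Both inequalities come from the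
identity `∑ᵢ uᵢ Dᵢ(y) = y₀ L(u) - u · y`, applied to orthogonal integer vectors `u ⊥ y`.

If `‖D(y)‖ ≤ ‖y‖^{-ω₀}`, Siegel's lemma gives `u ⊥ y` with `‖u‖ⁿ ≪ ‖y‖`, and the identity
yields `|L(u)| ≪ ‖u‖ ‖y‖^{-1-ω₀} ≪ ‖u‖^{-(nω₀+n-1)}`.

If `|L(u)| ≤ ‖u‖^{-ω}`, let `|u_k|` be the largest of `|u₁|, …, |uₙ|` and `v = ‖u‖^{ω/n}`. A box
argument on the fractional parts `{aθᵢ}` (`i ≠ k`, `⌊v⌋` boxes each) combined with a congruence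
modulo `u_k` gives `y ⊥ u` with `|Dᵢ(y)| < 1/⌊v⌋` for `i ≠ k`, and the identity bounds `D_k(y)`
as well. Then `‖D(y)‖ ≪ 1/v` while `‖y‖ ≪ vⁿ⁻¹ ‖u‖`, whence the exponent `ω/((n-1)ω+n)`.

In both directions `L(u)`, resp. `D(y)`, of the vector produced tends to `0`, while linear
independence of `1, θ₁, …, θₙ` keeps it nonzero; so infinitely many distinct vectors are produced.
-/

open Filter Topology

namespace Khintchine

section Infinitude

variable {α β : Type*}

theorem infinite_of_frequently_exists_le {l : Filter α} {P : α → Prop} {ε : α → ℝ}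
    {T : Set β} {g : β → ℝ} (hP : ∃ᶠ x in l, P x) (hε : Tendsto ε l (𝓝 0))
    (hg : ∀ y ∈ T, 0 < g y) (h : ∀ᶠ x in l, P x → ∃ y ∈ T, g y ≤ ε x) : T.Infinite := by
  intro hT
  have hlt : ∀ᶠ x in l, ∀ y ∈ T, ε x < g y :=
    (eventually_all_finite hT).2 fun y hy => hε.eventually (gt_mem_nhds (hg y hy))
  obtain ⟨x, hx, hxT, hlt⟩ := (hP.and_eventually (h.and hlt)).exists
  obtain ⟨y, hy, hle⟩ := hxT hx
  exact (hle.trans_lt (hlt y hy)).false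

theorem infinite_le_rpow_of_infinite_le_mul_rpow {N f : α → ℝ} (hN : Tendsto N cofinite atTop)
    {C s ω : ℝ} (hω : ω < s) (h : {x | f x ≤ C * N x ^ (-s)}.Infinite) :
    {x | f x ≤ N x ^ (-ω)}.Infinite := by
  rw [← frequently_cofinite_iff_infinite] at h ⊢
  have hC : ∀ᶠ x in cofinite, C ≤ N x ^ (s - ω) :=
    ((tendsto_rpow_atTop (sub_pos.2 hω)).comp hN).eventually_ge_atTop C
  refine h.mp ((hC.and (hN.eventually_gt_atTop 0)).mono fun x ⟨hCx, hx⟩ hfx => hfx.trans ?_)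
  calc C * N x ^ (-s) ≤ N x ^ (s - ω) * N x ^ (-s) := by gcongr
    _ = N x ^ (-ω) := by rw [← Real.rpow_add hx]; ring_nf

end Infinitude

theorem rpow_neg_le_mul_rpow_neg_of_pow_le {a U Y t : ℝ} {m : ℕ} (ha : 0 < a) (hU : 0 < U)
    (h : U ^ m ≤ a * Y) (ht : 0 ≤ t) : Y ^ (-t) ≤ a ^ t * U ^ (-(m * t)) := by
  calc Y ^ (-t) = a ^ t * (a * Y) ^ (-t) := by
        rw [Real.mul_rpow ha.le (by nlinarith [pow_pos hU m]), ← mul_assoc,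
          ← Real.rpow_add ha, add_neg_cancel, Real.rpow_zero, one_mul]
    _ ≤ a ^ t * (U ^ m) ^ (-t) := by
        gcongr ?_ * ?_
        exact Real.rpow_le_rpow_of_nonpos (pow_pos hU m) h (neg_nonpos.2 ht)
    _ = a ^ t * U ^ (-(m * t)) := by rw [← Real.rpow_natCast_mul hU.le, neg_mul_eq_mul_neg]

section IntegerVectors

variable {ι : Type*} [Fintype ι]

theorem tendsto_norm_intVec_cofinite_atTop : Tendsto (fun x : ι → ℤ => ‖x‖) cofinite atTop := by
  rw [← cocompact_eq_cofinite]
  exact tendsto_norm_cocompact_atTop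

theorem one_le_norm_intVec {x : ι → ℤ} (hx : x ≠ 0) : 1 ≤ ‖x‖ := by
  obtain ⟨i, hi⟩ := Function.ne_iff.1 hx
  calc (1 : ℝ) ≤ ‖x i‖ := by rw [Int.norm_eq_abs]; exact_mod_cast Int.one_le_abs hi
    _ ≤ ‖x‖ := norm_le_pi_norm x i

end IntegerVectors

variable {n : ℕ}

theorem maxAbs_eq_norm (x : Fin (n + 1) → ℤ) : maxAbs x = ‖x‖ := by
  rw [maxAbs, Pi.norm_def, ← NNReal.coe_natCast, Finset.apply_sup_eq_sup_comp
    (fun k : ℕ => (k : NNReal)) (fun a b => by simp) (by simp)]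
  simp [Function.comp_def, NNReal.natCast_natAbs]

def linForm (θ : Fin n → ℝ) (u : Fin (n + 1) → ℤ) : ℝ :=
  (u 0 : ℝ) + ∑ i : Fin n, (u i.succ : ℝ) * θ i

def simulErr (θ : Fin n → ℝ) (y : Fin (n + 1) → ℤ) : Fin n → ℝ :=
  fun i => (y 0 : ℝ) * θ i - (y i.succ : ℝ)

def linFormSet (θ : Fin n → ℝ) (ω : ℝ) : Set (Fin (n + 1) → ℤ) :=
  {u | |linForm θ u| ≤ ‖u‖ ^ (-ω)}

def approxSet (θ : Fin n → ℝ) (ω : ℝ) : Set (Fin (n + 1) → ℤ) :=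
  {y | ‖simulErr θ y‖ ≤ ‖y‖ ^ (-ω)}

theorem omegaLastT_eq (θ : Fin n → ℝ) :
    omegaLastT n θ = sSup {w : EReal | ∃ ω : ℝ, w = ω ∧ (linFormSet θ ω).Infinite} := by
  simp only [omegaLastT, linFormSet, linForm, maxAbs_eq_norm]

theorem omega0T_eq (θ : Fin n → ℝ) :
    omega0T n θ = sSup {w : EReal | ∃ ω : ℝ, w = ω ∧ (approxSet θ ω).Infinite} := by
  simp only [omega0T, approxSet, maxAbs_eq_norm, simulErr,
    pi_norm_le_iff_of_nonneg (Real.rpow_nonneg (norm_nonneg _) _), Real.norm_eq_abs]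

variable {θ : Fin n → ℝ}

theorem linForm_ne_zero (hθ : LinearIndependent ℚ (Fin.cons (1 : ℝ) θ))
    {u : Fin (n + 1) → ℤ} (hu : u ≠ 0) : linForm θ u ≠ 0 := by
  intro h
  refine hu (funext fun j => ?_)
  have := Fintype.linearIndependent_iff.1 hθ (fun j => (u j : ℚ)) ?_ j
  · exact_mod_cast this
  · simpa [Fin.sum_univ_succ, Rat.smul_def, linForm] using h

theorem linForm_cons_single (y : Fin (n + 1) → ℤ) (i : Fin n) :
    linForm θ (Fin.cons (-y i.succ) (Pi.single i (y 0))) = simulErr θ y i := by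
  simp [linForm, simulErr, Pi.single_apply]
  ring

theorem simulErr_ne_zero (hθ : LinearIndependent ℚ (Fin.cons (1 : ℝ) θ)) (i : Fin n)
    {y : Fin (n + 1) → ℤ} (hy : y 0 ≠ 0) : simulErr θ y i ≠ 0 := by
  rw [← linForm_cons_single]
  exact linForm_ne_zero hθ fun h => hy (by simpa using congr_fun h i.succ)

theorem sum_mul_simulErr (θ : Fin n → ℝ) (u y : Fin (n + 1) → ℤ) :
    ∑ i, (u i.succ : ℝ) * simulErr θ y i = y 0 * linForm θ u - ∑ j, (u j : ℝ) * y j := by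
  simp only [simulErr, linForm, Fin.sum_univ_succ, mul_sub, mul_add, Finset.sum_sub_distrib,
    Finset.mul_sum, mul_left_comm (y 0 : ℝ)]
  ring

theorem abs_sum_mul_simulErr_le (u y : Fin (n + 1) → ℤ) :
    |∑ i, (u i.succ : ℝ) * simulErr θ y i| ≤ n * ‖u‖ * ‖simulErr θ y‖ := by
  calc |∑ i, (u i.succ : ℝ) * simulErr θ y i| ≤ ∑ i, |(u i.succ : ℝ) * simulErr θ y i| :=
        Finset.abs_sum_le_sum_abs _ _
    _ ≤ ∑ _i : Fin n, ‖u‖ * ‖simulErr θ y‖ := by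
        gcongr with i
        rw [abs_mul, ← Int.norm_eq_abs, ← Real.norm_eq_abs]
        exact mul_le_mul (norm_le_pi_norm u _) (norm_le_pi_norm _ i) (norm_nonneg _)
          (norm_nonneg _)
    _ = n * ‖u‖ * ‖simulErr θ y‖ := by simp [mul_assoc]

theorem norm_le_of_simulErr (θ : Fin n → ℝ) (y : Fin (n + 1) → ℤ) :
    ‖y‖ ≤ |(y 0 : ℝ)| * (1 + ‖θ‖) + ‖simulErr θ y‖ := by
  refine (pi_norm_le_iff_of_nonneg (by positivity)).2 fun j => ?_
  rw [Int.norm_eq_abs]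
  refine Fin.cases ?_ (fun i => ?_) j
  · nlinarith [abs_nonneg (y 0 : ℝ), norm_nonneg θ, norm_nonneg (simulErr θ y)]
  · have hy : (y i.succ : ℝ) = y 0 * θ i - simulErr θ y i := by simp [simulErr]
    have hθ : |θ i| ≤ ‖θ‖ := (Real.norm_eq_abs _).symm.trans_le (norm_le_pi_norm θ i)
    have hD : |simulErr θ y i| ≤ ‖simulErr θ y‖ :=
      (Real.norm_eq_abs _).symm.trans_le (norm_le_pi_norm _ i)
    rw [hy]
    calc |(y 0 : ℝ) * θ i - simulErr θ y i| ≤ |(y 0 : ℝ)| * |θ i| + |simulErr θ y i| := by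
          rw [← abs_mul]; exact abs_sub _ _
      _ ≤ |(y 0 : ℝ)| * (1 + ‖θ‖) + ‖simulErr θ y‖ := by
          gcongr; linarith

section Siegel

attribute [local instance] Matrix.seminormedAddCommGroup

theorem exists_ne_zero_dotProduct_eq_zero_pow_norm_le (hn : 0 < n) {y : Fin (n + 1) → ℤ}
    (hy : y ≠ 0) : ∃ u : Fin (n + 1) → ℤ, u ≠ 0 ∧ ∑ j, (u j : ℝ) * y j = 0 ∧
      ‖u‖ ^ n ≤ (n + 1) * ‖y‖ := by
  obtain ⟨u, hu, hAu, hnorm⟩ := Int.Matrix.exists_ne_zero_int_vec_norm_le'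
    (Matrix.replicateRow (Fin 1) y) (by simpa) (by simp)
    (by simpa [← Matrix.ext_iff, funext_iff] using hy)
  refine ⟨u, hu, ?_, ?_⟩
  · have := congr_fun hAu 0
    simp only [Matrix.mulVec, Matrix.replicateRow, dotProduct] at this
    exact_mod_cast (by simpa [mul_comm] using this : ∑ j, u j * y j = 0)
  · have hA : ‖Matrix.replicateRow (Fin 1) y‖ = ‖y‖ := Matrix.norm_replicateRow y
    rw [hA] at hnorm
    simp only [Fintype.card_fin, Fintype.card_unique, Nat.cast_add, Nat.cast_one,
      add_sub_cancel_right, one_div] at hnorm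
    calc ‖u‖ ^ n ≤ (((n + 1) * ‖y‖) ^ (n : ℝ)⁻¹) ^ n := by gcongr
      _ = (n + 1) * ‖y‖ := Real.rpow_inv_natCast_pow (by positivity) hn.ne'

end Siegel

theorem exists_abs_linForm_le_of_mem_approxSet (hn : 0 < n) {ω₀ : ℝ} (hω₀ : 0 ≤ ω₀)
    {y : Fin (n + 1) → ℤ} (hy : y ∈ approxSet θ ω₀) (hY : 2 ≤ ‖y‖) :
    ∃ u : Fin (n + 1) → ℤ, u ≠ 0 ∧ ‖u‖ ^ n ≤ (n + 1) * ‖y‖ ∧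
      |linForm θ u| ≤ 2 * n * (1 + ‖θ‖) * ‖u‖ * ‖y‖ ^ (-(1 + ω₀)) := by
  have hy0 : y ≠ 0 := by rintro rfl; norm_num at hY
  obtain ⟨u, hu, hdot, hnorm⟩ := exists_ne_zero_dotProduct_eq_zero_pow_norm_le hn hy0
  refine ⟨u, hu, hnorm, ?_⟩
  have hD : ‖simulErr θ y‖ ≤ 1 :=
    hy.trans (Real.rpow_le_one_of_one_le_of_nonpos (by linarith) (by linarith))
  have hY0 : ‖y‖ ≤ 2 * |(y 0 : ℝ)| * (1 + ‖θ‖) := by linarith [norm_le_of_simulErr θ y]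
  have hkey : |(y 0 : ℝ)| * |linForm θ u| ≤ n * ‖u‖ * ‖y‖ ^ (-ω₀) := by
    rw [← abs_mul, ← sub_zero ((y 0 : ℝ) * _), ← hdot, ← sum_mul_simulErr]
    exact (abs_sum_mul_simulErr_le u y).trans (by gcongr; exact hy)
  have hYpos : 0 < ‖y‖ := by linarith
  rw [show -(1 + ω₀) = -ω₀ - 1 by ring, Real.rpow_sub_one hYpos.ne', ← mul_div_assoc,
    le_div_iff₀ hYpos]
  calc |linForm θ u| * ‖y‖ ≤ |linForm θ u| * (2 * |(y 0 : ℝ)| * (1 + ‖θ‖)) := by gcongr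
    _ = 2 * (1 + ‖θ‖) * (|(y 0 : ℝ)| * |linForm θ u|) := by ring
    _ ≤ 2 * (1 + ‖θ‖) * (n * ‖u‖ * ‖y‖ ^ (-ω₀)) := by gcongr
    _ = _ := by field_simp

theorem infinite_linFormSet_of_infinite_approxSet (hn : 0 < n)
    (hθ : LinearIndependent ℚ (Fin.cons (1 : ℝ) θ)) {ω₀ ω : ℝ} (hω₀ : 0 ≤ ω₀)
    (hs : 0 < n * ω₀ + n - 1) (hω : ω < n * ω₀ + n - 1) (h : (approxSet θ ω₀).Infinite) :
    (linFormSet θ ω).Infinite := by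
  set s : ℝ := n * ω₀ + n - 1
  set c : ℝ := 2 * n * (1 + ‖θ‖)
  have hn' : (0 : ℝ) < n := by exact_mod_cast hn
  have hε : Tendsto (fun y : Fin (n + 1) → ℤ => c * (n + 1) ^ (n : ℝ)⁻¹ * ‖y‖ ^ (-(s / n)))
      cofinite (𝓝 0) := by
    simpa using ((tendsto_rpow_neg_atTop (div_pos hs hn')).comp
      tendsto_norm_intVec_cofinite_atTop).const_mul (c * (n + 1) ^ (n : ℝ)⁻¹)
  refine infinite_le_rpow_of_infinite_le_mul_rpow tendsto_norm_intVec_cofinite_atTop hω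
    (C := c * (n + 1) ^ (1 + ω₀)) (f := fun u => |linForm θ u|) ?_
  refine (infinite_of_frequently_exists_le (frequently_cofinite_iff_infinite.2 h) hε
    (T := {u | u ≠ 0 ∧ |linForm θ u| ≤ c * (n + 1) ^ (1 + ω₀) * ‖u‖ ^ (-s)})
    (g := fun u => |linForm θ u|) (fun u hu => abs_pos.2 (linForm_ne_zero hθ hu.1)) ?_).mono
    fun u hu => hu.2
  filter_upwards [tendsto_norm_intVec_cofinite_atTop.eventually_ge_atTop 2] with y hY hy
  obtain ⟨u, hu, hnorm, hL⟩ := exists_abs_linForm_le_of_mem_approxSet hn hω₀ hy hY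
  have hYpos : 0 < ‖y‖ := by linarith
  have hUpos : 0 < ‖u‖ := by linarith [one_le_norm_intVec hu]
  refine ⟨u, ⟨hu, hL.trans ?_⟩, hL.trans ?_⟩
  · calc c * ‖u‖ * ‖y‖ ^ (-(1 + ω₀))
        ≤ c * ‖u‖ * ((n + 1) ^ (1 + ω₀) * ‖u‖ ^ (-(n * (1 + ω₀)))) := by
          gcongr
          exact rpow_neg_le_mul_rpow_neg_of_pow_le (by positivity) hUpos hnorm (by linarith)
      _ = c * (n + 1) ^ (1 + ω₀) * (‖u‖ ^ (-(n * (1 + ω₀))) * ‖u‖) := by ring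
      _ = c * (n + 1) ^ (1 + ω₀) * ‖u‖ ^ (-s) := by
          rw [← Real.rpow_add_one hUpos.ne']
          congr 2
          simp only [s]
          ring
  · have hu' : ‖u‖ ≤ ((n + 1) * ‖y‖) ^ (n : ℝ)⁻¹ := by
      rw [← Real.pow_rpow_inv_natCast hUpos.le hn.ne']
      gcongr
    calc c * ‖u‖ * ‖y‖ ^ (-(1 + ω₀))
        ≤ c * ((n + 1) * ‖y‖) ^ (n : ℝ)⁻¹ * ‖y‖ ^ (-(1 + ω₀)) := by gcongr
      _ = c * (n + 1) ^ (n : ℝ)⁻¹ * (‖y‖ ^ (n : ℝ)⁻¹ * ‖y‖ ^ (-(1 + ω₀))) := by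
          rw [Real.mul_rpow (by positivity) hYpos.le]
          ring
      _ = c * (n + 1) ^ (n : ℝ)⁻¹ * ‖y‖ ^ (-(s / n)) := by
          rw [← Real.rpow_add hYpos]
          congr 2
          field_simp
          ring

theorem exists_abs_fract_sub_lt_and_dvd {ι : Type*} [Fintype ι] (α : ι → ℝ) (g : ℕ → ℤ)
    {K Q : ℕ} (hK : 0 < K) (hQ : 0 < Q) :
    ∃ a b : ℕ, a < b ∧ b ≤ K ^ Fintype.card ι * Q ∧
      (∀ j, |Int.fract (b * α j) - Int.fract (a * α j)| < 1 / K) ∧ (Q : ℤ) ∣ g b - g a := by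
  classical
  set cell : ℕ → (ι → ℤ) × ℤ := fun a => (fun j => ⌊K * Int.fract (a * α j)⌋, g a % Q)
  have hmaps : ∀ a ∈ Finset.range (K ^ Fintype.card ι * Q + 1),
      cell a ∈ Fintype.piFinset (fun _ : ι => Finset.Ico (0 : ℤ) K) ×ˢ Finset.Ico (0 : ℤ) Q := by
    intro a _
    simp only [Finset.mem_product, Fintype.mem_piFinset, Finset.mem_Ico, cell]
    refine ⟨fun j => ⟨Int.floor_nonneg.2 (by positivity), Int.floor_lt.2 ?_⟩,
      Int.emod_nonneg _ (by positivity), Int.emod_lt_of_pos _ (by positivity)⟩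
    have hK' : (0 : ℝ) < K := by exact_mod_cast hK
    push_cast
    nlinarith [Int.fract_lt_one ((a : ℝ) * α j)]
  have hcard : (Fintype.piFinset (fun _ : ι => Finset.Ico (0 : ℤ) K) ×ˢ Finset.Ico (0 : ℤ) Q).card
      < (Finset.range (K ^ Fintype.card ι * Q + 1)).card := by
    simp [Finset.card_product, Fintype.card_piFinset]
  obtain ⟨a, ha, b, hb, hne, hab⟩ := Finset.exists_ne_map_eq_of_card_lt_of_maps_to hcard hmaps
  wlog hlt : a < b generalizing a b
  · exact this b hb a ha hne.symm hab.symm (by omega)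
  refine ⟨a, b, hlt, Nat.lt_succ_iff.1 (Finset.mem_range.1 hb), fun j => ?_,
    Int.ModEq.dvd (congr_arg Prod.snd hab)⟩
  have hK' : (0 : ℝ) < K := by exact_mod_cast hK
  have := Int.abs_sub_lt_one_of_floor_eq_floor (congr_fun (congr_arg Prod.fst hab) j).symm
  rw [← mul_sub, abs_mul, abs_of_pos hK'] at this
  rw [lt_div_iff₀ hK']
  linarith

theorem exists_dotProduct_eq_zero_abs_simulErr_lt (θ : Fin n → ℝ) (u : Fin (n + 1) → ℤ)
    (k : Fin n) (hk : u k.succ ≠ 0) {K : ℕ} (hK : 0 < K) :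
    ∃ y : Fin (n + 1) → ℤ, 0 < y 0 ∧ (y 0 : ℝ) ≤ K ^ (n - 1) * |(u k.succ : ℝ)| ∧
      ∑ j, (u j : ℝ) * y j = 0 ∧ ∀ i ≠ k, |simulErr θ y i| < 1 / K := by
  obtain ⟨a, b, hab, hbK, hfract, hdvd⟩ := exists_abs_fract_sub_lt_and_dvd
    (fun i : {i // i ≠ k} => θ i) (fun a => u 0 * a + ∑ i, u i.succ * ⌊a * θ i⌋) hK
    (Int.natAbs_pos.2 hk)
  obtain ⟨q, hq⟩ := Int.natAbs_dvd.1 hdvd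
  -- `u · (b - a, ⌊bθ⌋ - ⌊aθ⌋) = u_k q`, so subtracting `q` at coordinate `k` puts `y` on `u^⊥`.
  refine ⟨Fin.cons ((b : ℤ) - a) fun i => ⌊b * θ i⌋ - ⌊a * θ i⌋ - if i = k then q else 0,
    by simpa using hab, ?_, ?_, fun i hi => ?_⟩
  · have hb : (b : ℝ) ≤ K ^ (n - 1) * |(u k.succ : ℝ)| := by
      rw [Fintype.card_subtype_compl, Fintype.card_fin, Fintype.card_unique] at hbK
      rw [← Int.cast_abs, ← Nat.cast_natAbs]
      exact_mod_cast hbK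
    simp only [Fin.cons_zero]
    push_cast
    linarith [(Nat.cast_nonneg a : (0 : ℝ) ≤ a)]
  · have hdot : ∑ j, u j * (Fin.cons ((b : ℤ) - a)
        fun i => ⌊b * θ i⌋ - ⌊a * θ i⌋ - if i = k then q else 0 : Fin (n + 1) → ℤ) j = 0 := by
      simp only [Fin.sum_univ_succ, Fin.cons_zero, Fin.cons_succ, mul_sub, Finset.sum_sub_distrib,
        mul_ite, mul_zero, Finset.sum_ite_eq', Finset.mem_univ, if_true]
      linear_combination hq
    exact_mod_cast hdot
  · have := hfract ⟨i, hi⟩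
    simp only [simulErr, Fin.cons_zero, Fin.cons_succ, if_neg hi, sub_zero] at this ⊢
    push_cast
    convert this using 2
    simp only [Int.fract]
    ring

theorem exists_norm_simulErr_le (θ : Fin n → ℝ) (u : Fin (n + 1) → ℤ) (k : Fin n)
    (hk : ∀ i : Fin n, |(u i.succ : ℝ)| ≤ |(u k.succ : ℝ)|) (hk0 : u k.succ ≠ 0) {K : ℕ}
    (hK : 0 < K) (hKL : (K : ℝ) ^ n * |linForm θ u| ≤ 1) :
    ∃ y : Fin (n + 1) → ℤ, 0 < y 0 ∧ (y 0 : ℝ) ≤ K ^ (n - 1) * |(u k.succ : ℝ)| ∧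
      ‖simulErr θ y‖ ≤ n / K := by
  obtain ⟨y, hy0, hy0K, hdot, hlt⟩ := exists_dotProduct_eq_zero_abs_simulErr_lt θ u k hk0 hK
  refine ⟨y, hy0, hy0K, (pi_norm_le_iff_of_nonneg (by positivity)).2 fun i => ?_⟩
  rw [Real.norm_eq_abs]
  have hK' : (0 : ℝ) < K := by exact_mod_cast hK
  have hn1 : (1 : ℝ) ≤ n := by exact_mod_cast k.pos
  set U := |(u k.succ : ℝ)|
  have hU : 0 < U := abs_pos.2 (Int.cast_ne_zero.2 hk0)
  have hrest : |∑ i ∈ Finset.univ.erase k, (u i.succ : ℝ) * simulErr θ y i|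
      ≤ (n - 1) * (U / K) := by
    calc _ ≤ ∑ i ∈ Finset.univ.erase k, |(u i.succ : ℝ) * simulErr θ y i| :=
          Finset.abs_sum_le_sum_abs _ _
      _ ≤ ∑ i ∈ Finset.univ.erase k, U * (1 / K) := by
          gcongr with i hi
          rw [abs_mul]
          exact mul_le_mul (hk i) (hlt i (Finset.ne_of_mem_erase hi)).le (abs_nonneg _) hU.le
      _ = (n - 1) * (U / K) := by
          rw [Finset.sum_const, Finset.card_erase_of_mem (Finset.mem_univ k), nsmul_eq_mul,
            Finset.card_univ, Fintype.card_fin, Nat.cast_sub k.pos, Nat.cast_one]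
          ring
  have hy0L : (y 0 : ℝ) * |linForm θ u| ≤ U / K := by
    calc (y 0 : ℝ) * |linForm θ u| ≤ K ^ (n - 1) * U * |linForm θ u| := by gcongr
      _ = U / K * (K ^ n * |linForm θ u|) := by
          rw [← pow_sub_one_mul k.pos.ne']
          field_simp
      _ ≤ U / K := mul_le_of_le_one_right (by positivity) hKL
  -- The box argument leaves `D_k(y)` free; the identity with `u · y = 0` bounds it.
  have hsplit : (u k.succ : ℝ) * simulErr θ y k
      = y 0 * linForm θ u - ∑ i ∈ Finset.univ.erase k, (u i.succ : ℝ) * simulErr θ y i := by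
    rw [eq_sub_iff_add_eq, Finset.add_sum_erase Finset.univ
      (fun i => (u i.succ : ℝ) * simulErr θ y i) (Finset.mem_univ k), sum_mul_simulErr, hdot,
      sub_zero]
  have hDk : U * |simulErr θ y k| ≤ U * (n / K) := by
    rw [← abs_mul, hsplit]
    calc _ ≤ |(y 0 : ℝ) * linForm θ u| + |∑ i ∈ Finset.univ.erase k,
          (u i.succ : ℝ) * simulErr θ y i| := abs_sub _ _
      _ ≤ U / K + (n - 1) * (U / K) := by
          rw [abs_mul, abs_of_pos (by exact_mod_cast hy0 : (0 : ℝ) < y 0)]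
          exact add_le_add hy0L hrest
      _ = U * (n / K) := by ring
  by_cases hi : i = k
  · subst hi
    exact le_of_mul_le_mul_left hDk hU
  · exact (hlt i hi).le.trans (by gcongr)

theorem exists_simulErr_le_of_pow_mul_linForm_le {u : Fin (n + 1) → ℤ} (hu : u ≠ 0)
    (hL : |linForm θ u| < 1) {v : ℝ} (hv : 1 ≤ v) (hvL : v ^ n * |linForm θ u| ≤ 1) :
    ∃ y : Fin (n + 1) → ℤ, 0 < y 0 ∧ ‖simulErr θ y‖ ≤ 2 * n / v ∧
      ‖y‖ ≤ (1 + ‖θ‖ + n) * v ^ (n - 1) * ‖u‖ := by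
  obtain ⟨i₀, hi₀⟩ : ∃ i : Fin n, u i.succ ≠ 0 := by
    by_contra! h
    have hu0 : u 0 ≠ 0 := fun h0 => hu (funext (Fin.cases h0 h))
    have hLu : linForm θ u = u 0 := by simp [linForm, h]
    rw [hLu] at hL
    exact hL.not_ge (by exact_mod_cast Int.one_le_abs hu0)
  obtain ⟨k, -, hk⟩ := Finset.exists_max_image Finset.univ (fun i : Fin n => |(u i.succ : ℝ)|)
    ⟨i₀, Finset.mem_univ _⟩
  have hk0 : u k.succ ≠ 0 := by
    intro h
    have := hk i₀ (Finset.mem_univ _)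
    simp only [h, Int.cast_zero, abs_zero, abs_nonpos_iff, Int.cast_eq_zero] at this
    exact hi₀ this
  set K := ⌊v⌋₊
  have hK : 0 < K := Nat.floor_pos.2 hv
  have hK' : (1 : ℝ) ≤ K := by exact_mod_cast hK
  have hKv : (K : ℝ) ≤ v := Nat.floor_le (by linarith)
  have hvK : v ≤ 2 * K := by linarith [Nat.lt_floor_add_one v]
  obtain ⟨y, hy0, hy0K, hD⟩ := exists_norm_simulErr_le θ u k (fun i => hk i (Finset.mem_univ _))
    hk0 hK ((mul_le_mul_of_nonneg_right (pow_le_pow_left₀ (Nat.cast_nonneg _) hKv n)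
      (abs_nonneg _)).trans hvL)
  refine ⟨y, hy0, hD.trans ?_, ?_⟩
  · rw [div_le_div_iff₀ (by linarith) (by linarith)]
    nlinarith [(Nat.cast_nonneg n : (0 : ℝ) ≤ n)]
  have hUk : |(u k.succ : ℝ)| ≤ ‖u‖ := (Int.norm_eq_abs _).symm.trans_le (norm_le_pi_norm u _)
  have hvn : 1 ≤ v ^ (n - 1) * ‖u‖ :=
    one_le_mul_of_one_le_of_one_le (one_le_pow₀ hv) (one_le_norm_intVec hu)
  calc ‖y‖ ≤ |(y 0 : ℝ)| * (1 + ‖θ‖) + ‖simulErr θ y‖ := norm_le_of_simulErr θ y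
    _ ≤ v ^ (n - 1) * ‖u‖ * (1 + ‖θ‖) + n := by
        gcongr
        · rw [abs_of_pos (by exact_mod_cast hy0)]
          exact hy0K.trans (by gcongr)
        · exact hD.trans (div_le_self (Nat.cast_nonneg _) hK')
    _ ≤ (1 + ‖θ‖ + n) * v ^ (n - 1) * ‖u‖ := by nlinarith [norm_nonneg θ]

theorem exists_simulErr_le_of_mem_linFormSet (hn : 0 < n) {ω₁ : ℝ} (hω₁ : 0 < ω₁)
    {u : Fin (n + 1) → ℤ} (hu : u ∈ linFormSet θ ω₁) (hU : 2 ≤ ‖u‖) :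
    ∃ y : Fin (n + 1) → ℤ, 0 < y 0 ∧ ‖simulErr θ y‖ ≤ 2 * n * ‖u‖ ^ (-(ω₁ / n)) ∧
      ‖simulErr θ y‖ ≤ 2 * n * (1 + ‖θ‖ + n) ^ (ω₁ / ((n - 1) * ω₁ + n)) *
        ‖y‖ ^ (-(ω₁ / ((n - 1) * ω₁ + n))) := by
  have hn' : (1 : ℝ) ≤ n := by exact_mod_cast hn
  have hd₁ : 0 < ((n : ℝ) - 1) * ω₁ + n := by nlinarith
  have hωn : 0 < ω₁ / n := div_pos hω₁ (by linarith)
  have hUpos : 0 < ‖u‖ := by linarith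
  have hu0 : u ≠ 0 := by rintro rfl; norm_num at hU
  set E : ℝ := ((n - 1) * ω₁ + n) / n with hE
  set w₁ : ℝ := ω₁ / ((n - 1) * ω₁ + n) with hw₁
  set c : ℝ := 1 + ‖θ‖ + n
  have hc : 0 < c := by positivity
  -- Then `‖D(y)‖ ≪ ‖u‖^{-ω₁/n}` and `‖y‖ ≪ ‖u‖^E`, where `E w₁ = ω₁ / n`.
  set v := ‖u‖ ^ (ω₁ / n)
  have hv : 1 ≤ v := Real.one_le_rpow (by linarith) hωn.le
  have hL1 : |linForm θ u| < 1 :=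
    hu.trans_lt (Real.rpow_lt_one_of_one_lt_of_neg (by linarith) (by linarith))
  have hvL : v ^ n * |linForm θ u| ≤ 1 := by
    rw [← Real.rpow_mul_natCast hUpos.le, div_mul_cancel₀ _ (by positivity)]
    calc _ ≤ ‖u‖ ^ ω₁ * ‖u‖ ^ (-ω₁) := by gcongr; exact hu
      _ = 1 := by rw [← Real.rpow_add hUpos, add_neg_cancel, Real.rpow_zero]
  obtain ⟨y, hy0, hD, hy⟩ := exists_simulErr_le_of_pow_mul_linForm_le hu0 hL1 hv hvL
  have hDu : ‖simulErr θ y‖ ≤ 2 * n * ‖u‖ ^ (-(ω₁ / n)) := by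
    rwa [Real.rpow_neg hUpos.le, ← div_eq_mul_inv]
  refine ⟨y, hy0, hDu, ?_⟩
  have hyE : ‖y‖ ≤ c * ‖u‖ ^ E := by
    calc ‖y‖ ≤ c * v ^ (n - 1) * ‖u‖ := hy
      _ = c * ‖u‖ ^ E := by
        rw [mul_assoc, ← Real.rpow_mul_natCast hUpos.le, ← Real.rpow_add_one hUpos.ne', hE]
        congr 2
        rw [Nat.cast_sub hn, Nat.cast_one]
        field_simp
  have hypos : 0 < ‖y‖ := by
    have := one_le_norm_intVec (x := y) fun h => by simp [h] at hy0
    linarith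
  calc ‖simulErr θ y‖ ≤ 2 * n * ‖u‖ ^ (-(ω₁ / n)) := hDu
    _ = 2 * n * c ^ w₁ * (c * ‖u‖ ^ E) ^ (-w₁) := by
        rw [Real.mul_rpow hc.le (by positivity), ← Real.rpow_mul hUpos.le, ← mul_assoc,
          mul_assoc (2 * (n : ℝ)), ← Real.rpow_add hc, add_neg_cancel, Real.rpow_zero, mul_one,
          hE, hw₁]
        congr 2
        have : ω₁ * ((n : ℝ) - 1) + n ≠ 0 := (by linarith : 0 < ω₁ * ((n : ℝ) - 1) + n).ne'
        field_simp
    _ ≤ 2 * n * c ^ w₁ * ‖y‖ ^ (-w₁) := by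
        gcongr ?_ * ?_
        exact Real.rpow_le_rpow_of_nonpos hypos hyE (neg_nonpos.2 (div_pos hω₁ hd₁).le)

theorem infinite_approxSet_of_infinite_linFormSet (hn : 0 < n)
    (hθ : LinearIndependent ℚ (Fin.cons (1 : ℝ) θ)) {ω ω₁ : ℝ} (hω : 0 < ω) (hω₁ : ω < ω₁)
    (h : (linFormSet θ ω₁).Infinite) :
    (approxSet θ (ω / ((n - 1) * ω + n))).Infinite := by
  have hn' : (1 : ℝ) ≤ n := by exact_mod_cast hn
  set w₁ : ℝ := ω₁ / ((n - 1) * ω₁ + n)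
  have hlt : ω / ((n - 1) * ω + n) < w₁ := by
    rw [div_lt_div_iff₀ (by nlinarith) (by nlinarith)]
    nlinarith
  have hε : Tendsto (fun u : Fin (n + 1) → ℤ => 2 * n * ‖u‖ ^ (-(ω₁ / n))) cofinite (𝓝 0) := by
    simpa using ((tendsto_rpow_neg_atTop (div_pos (hω.trans hω₁) (by linarith))).comp
      tendsto_norm_intVec_cofinite_atTop).const_mul (2 * (n : ℝ))
  refine infinite_le_rpow_of_infinite_le_mul_rpow tendsto_norm_intVec_cofinite_atTop hlt
    (C := 2 * n * (1 + ‖θ‖ + n) ^ w₁) (f := fun y => ‖simulErr θ y‖) ?_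
  refine (infinite_of_frequently_exists_le (frequently_cofinite_iff_infinite.2 h) hε
    (T := {y | 0 < y 0 ∧ ‖simulErr θ y‖ ≤ 2 * n * (1 + ‖θ‖ + n) ^ w₁ * ‖y‖ ^ (-w₁)})
    (g := fun y => ‖simulErr θ y‖) (fun y hy => norm_pos_iff.2 fun h0 =>
      simulErr_ne_zero hθ ⟨0, hn⟩ hy.1.ne' (congr_fun h0 _)) ?_).mono fun y hy => hy.2
  filter_upwards [tendsto_norm_intVec_cofinite_atTop.eventually_ge_atTop 2] with u hU hu
  obtain ⟨y, hy0, hDu, hDy⟩ := exists_simulErr_le_of_mem_linFormSet hn (hω.trans hω₁) hu hU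
  exact ⟨y, ⟨hy0, hDy⟩, hDu⟩

theorem infinite_approxSet_zero (θ : Fin n → ℝ) : (approxSet θ 0).Infinite := by
  refine Set.infinite_of_injective_forall_mem
    (f := fun m : ℕ => (Fin.cons (m : ℤ) fun i => round ((m : ℝ) * θ i) : Fin (n + 1) → ℤ))
    (fun a b hab => by simpa using congr_fun hab 0) fun m => ?_
  simp only [approxSet, Set.mem_ofPred_eq, neg_zero, Real.rpow_zero]
  refine (pi_norm_le_iff_of_nonneg zero_le_one).2 fun i => ?_
  simp only [simulErr, Fin.cons_zero, Fin.cons_succ, Real.norm_eq_abs, Int.cast_natCast]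
  exact (abs_sub_round _).trans (by norm_num)

theorem infinite_linFormSet_zero (hn : 0 < n) (θ : Fin n → ℝ) : (linFormSet θ 0).Infinite := by
  set i : Fin n := ⟨0, hn⟩
  refine Set.infinite_of_injective_forall_mem
    (f := fun m : ℕ => (Fin.cons (-round ((m : ℝ) * θ i)) (Pi.single i (m : ℤ)) : Fin (n + 1) → ℤ))
    (fun a b hab => by simpa using congr_fun hab i.succ) fun m => ?_
  have := linForm_cons_single (θ := θ)
    (Fin.cons (m : ℤ) fun j => round ((m : ℝ) * θ j) : Fin (n + 1) → ℤ) i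
  simp only [Fin.cons_zero, Fin.cons_succ] at this
  simp only [linFormSet, Set.mem_ofPred_eq, neg_zero, Real.rpow_zero, this, simulErr,
    Fin.cons_zero, Fin.cons_succ, Int.cast_natCast]
  exact (abs_sub_round _).trans (by norm_num)

theorem mul_add_sub_one_le_of_infinite_approxSet (hn : 0 < n)
    (hθ : LinearIndependent ℚ (Fin.cons (1 : ℝ) θ)) {W : ℝ}
    (hW : ∀ ω, (linFormSet θ ω).Infinite → ω ≤ W) {ω₀ : ℝ} (h : (approxSet θ ω₀).Infinite) :
    n * ω₀ + n - 1 ≤ W := by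
  have key : ∀ ω₀ : ℝ, 0 ≤ ω₀ → 0 < n * ω₀ + n - 1 → (approxSet θ ω₀).Infinite →
      n * ω₀ + n - 1 ≤ W := fun ω₀ h₀ hs h => le_of_forall_lt_imp_le_of_dense fun ω hω =>
    hW ω (infinite_linFormSet_of_infinite_approxSet hn hθ h₀ hs hω h)
  have hn' : (1 : ℝ) ≤ n := by exact_mod_cast hn
  -- The trivial exponent `0` gives `n - 1 ≤ W`, which settles the cases not covered by `key`.
  have hW₀ : (n : ℝ) - 1 ≤ W := by
    rcases Nat.lt_or_ge 1 n with h1 | h1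
    · have h1' : (1 : ℝ) < n := by exact_mod_cast h1
      simpa using key 0 le_rfl (by linarith) (infinite_approxSet_zero θ)
    · obtain rfl : n = 1 := by omega
      simpa using hW 0 (infinite_linFormSet_zero hn θ)
  by_cases hpos : 0 ≤ ω₀ ∧ 0 < n * ω₀ + n - 1
  · exact key ω₀ hpos.1 hpos.2 h
  · rcases not_and_or.1 hpos with h₀ | hs <;> nlinarith

end Khintchine

/-- **Khintchine's transference principle.** For `Θ ∈ ℝⁿ` with `1, θ₁, …, θₙ` linearly
independent over `ℚ`: for every real `ω` with `0 < ω < ω_{n-1}(Θ)` one has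
`ω_0(Θ) ≥ ω/((n-1)ω + n)`; moreover, if `ω_{n-1}(Θ)` is finite (equal to a real `W`),
then `ω_0(Θ) ≤ (W - n + 1)/n`. -/
theorem khintchine_transference (n : ℕ) (hn : 0 < n) (θ : Fin n → ℝ)
    (hθ : LinearIndependent ℚ (Fin.cons (1 : ℝ) θ)) :
    (∀ ω : ℝ, 0 < ω → (ω : EReal) < omegaLastT n θ →
      ((ω / (((n : ℝ) - 1) * ω + (n : ℝ)) : ℝ) : EReal) ≤ omega0T n θ) ∧
    (∀ W : ℝ, omegaLastT n θ = (W : EReal) →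
      omega0T n θ ≤ (((W - (n : ℝ) + 1) / (n : ℝ) : ℝ) : EReal)) := by
  open Khintchine in
  rw [omegaLastT_eq, omega0T_eq]
  refine ⟨fun ω hω hlt => ?_, fun W hW => sSup_le ?_⟩
  · obtain ⟨_, ⟨ω₁, rfl, h⟩, hω₁⟩ := lt_sSup_iff.1 hlt
    exact le_sSup ⟨_, rfl, infinite_approxSet_of_infinite_linFormSet hn hθ hω
      (EReal.coe_lt_coe_iff.1 hω₁) h⟩
  · rintro _ ⟨ω₀, rfl, h⟩
    have hW' : ∀ ω, (linFormSet θ ω).Infinite → ω ≤ W := fun ω h =>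
      EReal.coe_le_coe_iff.1 (hW ▸ le_sSup ⟨ω, rfl, h⟩)
    rw [EReal.coe_le_coe_iff, le_div_iff₀ (by exact_mod_cast hn)]
    linarith [mul_add_sub_one_le_of_infinite_approxSet hn hθ hW' h]
end
end

section
/- (Going-up transfer, inequality (2.2).) For all real numbers ω and ŵ with −1 ≤ ω < ω_0(Θ) and 0 < ŵ < min(1, ω̂_0(Θ)), one has ω_1(Θ) ≥ (ω + ŵ)/(1 − ŵ); in particular ω_1(Θ) ≥ (ω_0(Θ) + ω̂_0(Θ))/(1 − ω̂_0(Θ)). -/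
open scoped BigOperators Pointwise

noncomputable section

/-!
Write `y = (1, θ)` and let `α < ω₀(Θ)`, `β < ω̂₀(Θ)`; since `ω₀ ≥ ω̂₀` one may take `0 < β ≤ α`.
Pick a primitive integer point `ξ` of large norm `N` with `|y ∧ ξ| ≤ N^{-α}`, and, by the
uniform exponent at scale `T = |ξ|_∞ / 2`, an integer point `z` with `|z|_∞ ≤ T` and
`|z - z₀ y| ≪ N^{-β}`. Primitivity together with `|z|_∞ < |ξ|_∞` forbids `z ∈ ℤξ`, so `ξ ∧ z` is
a nonzero integer bivector; it has `|ξ ∧ z| ≪ N^{1-β}`, and `|y ∧ ξ ∧ z| ≪ N^{-α-β}` because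
`y ∧ ξ ∧ z = y ∧ ξ ∧ (z - z₀ y)`. For `v = (ω + ŵ)/(1 - ŵ)` one has `v (1 - β) < α + β`, so
`|y ∧ ξ ∧ z| ≤ |ξ ∧ z|^{-v}` once `N` is large. Linear independence of `1, θ₁, …, θₙ` over `ℚ`
keeps `y ∧ ξ ∧ z ≠ 0`, and as `|y ∧ ξ ∧ z| → 0` infinitely many distinct bivectors arise.
-/

namespace GoingUp

open Finset Filter

variable {n r : ℕ}

lemma mvNorm_nonneg (X : MultiVec n r) : 0 ≤ mvNorm X := Real.sqrt_nonneg _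

lemma abs_apply_le_mvNorm (X : MultiVec n r) (S : {S : Finset (Fin (n + 1)) // S.card = r}) :
    |X S| ≤ mvNorm X := by
  rw [mvNorm, ← Real.sqrt_sq_eq_abs]
  exact Real.sqrt_le_sqrt <| single_le_sum (f := fun S => X S ^ 2) (fun _ _ => sq_nonneg _)
    (mem_univ S)

lemma mvNorm_le_of_forall_abs_le (X : MultiVec n r) {B : ℝ} (hB : 0 ≤ B)
    (h : ∀ S, |X S| ≤ B) : mvNorm X ≤ 2 ^ (n + 1) * B := by
  have hcard : (Fintype.card {S : Finset (Fin (n + 1)) // S.card = r} : ℝ) ≤ 2 ^ (n + 1) := by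
    exact_mod_cast (Fintype.card_subtype_le _).trans_eq (by simp)
  have hsum : ∑ S, X S ^ 2 ≤ Fintype.card {S : Finset (Fin (n + 1)) // S.card = r} * B ^ 2 := by
    simpa using sum_le_sum fun S (_ : S ∈ univ) => sq_le_sq' (abs_le.mp (h S)).1 (abs_le.mp (h S)).2
  have h1 : (1 : ℝ) ≤ 2 ^ (n + 1) := one_le_pow₀ one_le_two
  rw [mvNorm, Real.sqrt_le_iff]
  refine ⟨by positivity, hsum.trans ?_⟩
  nlinarith [sq_nonneg B, mul_le_mul_of_nonneg_right hcard (sq_nonneg B)]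

lemma mvNorm_eq_zero_iff (X : MultiVec n r) : mvNorm X = 0 ↔ X = 0 := by
  rw [mvNorm, Real.sqrt_eq_zero (sum_nonneg fun _ _ => sq_nonneg _),
    sum_eq_zero_iff_of_nonneg fun _ _ => sq_nonneg _, funext_iff]
  simp

lemma mvNorm_pos {X : MultiVec n r} (hX : X ≠ 0) : 0 < mvNorm X :=
  (mvNorm_nonneg X).lt_of_ne' ((mvNorm_eq_zero_iff X).not.mpr hX)

lemma one_le_mvNorm {X : MultiVec n r} (hint : mvIntegral X) (hX : X ≠ 0) : 1 ≤ mvNorm X := by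
  obtain ⟨S, hS⟩ := Function.ne_iff.mp hX
  obtain ⟨k, hk⟩ := hint S
  have hk0 : k ≠ 0 := by rintro rfl; simp_all
  calc (1 : ℝ) ≤ |(k : ℝ)| := by exact_mod_cast Int.one_le_abs hk0
    _ = |X S| := by rw [hk]
    _ ≤ mvNorm X := abs_apply_le_mvNorm X S

lemma mvNorm_smul (c : ℝ) (X : MultiVec n r) : mvNorm (c • X) = |c| * mvNorm X := by
  simp_rw [mvNorm, Pi.smul_apply, smul_eq_mul, mul_pow, ← mul_sum,
    Real.sqrt_mul (sq_nonneg c), Real.sqrt_sq_eq_abs]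

lemma mvNorm_le_mvNorm_smul (X : MultiVec n r) {c : ℝ} (hc : 1 ≤ c) :
    mvNorm X ≤ mvNorm (c • X) := by
  rw [mvNorm_smul, abs_of_pos (by linarith)]
  exact le_mul_of_one_le_left (mvNorm_nonneg X) hc

lemma finite_setOf_mvIntegral_mvNorm_le (B : ℝ) :
    {X : MultiVec n r | mvIntegral X ∧ mvNorm X ≤ B}.Finite := by
  refine (Set.Finite.pi' fun _ => ((Set.finite_Icc (-⌈B⌉) ⌈B⌉).image (Int.cast : ℤ → ℝ))).subset ?_
  rintro X ⟨hint, hB⟩ S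
  obtain ⟨k, hk⟩ := hint S
  have hkB : |(k : ℝ)| ≤ ⌈B⌉ := hk ▸ (abs_apply_le_mvNorm X S).trans (hB.trans (Int.le_ceil B))
  refine ⟨k, Set.mem_Icc.mpr ?_, hk.symm⟩
  rw [← abs_le]
  exact_mod_cast hkB

lemma exists_lt_mvNorm_of_infinite {A : Set (MultiVec n r)} (hA : A.Infinite)
    (hint : ∀ X ∈ A, mvIntegral X) (B : ℝ) : ∃ X ∈ A, B < mvNorm X := by
  by_contra! h
  exact hA ((finite_setOf_mvIntegral_mvNorm_le B).subset fun X hX => ⟨hint X hX, h X hX⟩)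

def mvCoeff (X : MultiVec n r) (s : Finset (Fin (n + 1))) : ℝ :=
  if h : s.card = r then X ⟨s, h⟩ else 0

lemma mvCoeff_val (X : MultiVec n r) (S : {S : Finset (Fin (n + 1)) // S.card = r}) :
    mvCoeff X S.1 = X S := dif_pos S.2

@[simp] lemma mvCoeff_zero (s : Finset (Fin (n + 1))) : mvCoeff (0 : MultiVec n r) s = 0 := by
  simp [mvCoeff]

lemma abs_mvCoeff_le_mvNorm (X : MultiVec n r) (s : Finset (Fin (n + 1))) :
    |mvCoeff X s| ≤ mvNorm X := by
  unfold mvCoeff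
  split_ifs
  · exact abs_apply_le_mvNorm X _
  · simpa using mvNorm_nonneg X

lemma exists_int_mvCoeff_eq {X : MultiVec n r} (hX : mvIntegral X) (s : Finset (Fin (n + 1))) :
    ∃ k : ℤ, mvCoeff X s = k := by
  unfold mvCoeff
  split_ifs
  · exact hX _
  · exact ⟨0, by simp⟩

lemma eq_zero_of_forall_mvCoeff_eq_zero {X : MultiVec n r}
    (h : ∀ S : {S : Finset (Fin (n + 1)) // S.card = r}, mvCoeff X S.1 = 0) : X = 0 :=
  funext fun S => by rw [← mvCoeff_val X S, h S, Pi.zero_apply]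

lemma exists_lt_of_card_eq_two {α : Type*} [LinearOrder α] {s : Finset α} (h : s.card = 2) :
    ∃ i j, i < j ∧ s = {i, j} := by
  refine ⟨s.orderEmbOfFin h 0, s.orderEmbOfFin h 1, by simp, ?_⟩
  ext x
  rw [← mem_coe, ← s.range_orderEmbOfFin h, Set.mem_range]
  simp [Fin.exists_fin_succ, eq_comm]

lemma exists_lt_lt_of_card_eq_three {α : Type*} [LinearOrder α] {s : Finset α} (h : s.card = 3) :
    ∃ i j k, i < j ∧ j < k ∧ s = {i, j, k} := by
  refine ⟨s.orderEmbOfFin h 0, s.orderEmbOfFin h 1, s.orderEmbOfFin h 2, by simp, by simp, ?_⟩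
  ext x
  rw [← mem_coe, ← s.range_orderEmbOfFin h, Set.mem_range]
  simp [Fin.exists_fin_succ, eq_comm]

lemma mvNorm_le_of_forall_pair (X : MultiVec n 2) {B : ℝ} (hB : 0 ≤ B)
    (h : ∀ i j, i < j → |mvCoeff X {i, j}| ≤ B) : mvNorm X ≤ 2 ^ (n + 1) * B := by
  refine mvNorm_le_of_forall_abs_le X hB fun S => ?_
  obtain ⟨i, j, hij, hS⟩ := exists_lt_of_card_eq_two S.2
  simpa [← mvCoeff_val, hS] using h i j hij

lemma mvNorm_le_of_forall_triple (X : MultiVec n 3) {B : ℝ} (hB : 0 ≤ B)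
    (h : ∀ i j k, i < j → j < k → |mvCoeff X {i, j, k}| ≤ B) : mvNorm X ≤ 2 ^ (n + 1) * B := by
  refine mvNorm_le_of_forall_abs_le X hB fun S => ?_
  obtain ⟨i, j, k, hij, hjk, hS⟩ := exists_lt_lt_of_card_eq_three S.2
  simpa [← mvCoeff_val, hS] using h i j k hij hjk

lemma vWedge_apply (y : Fin (n + 1) → ℝ) (X : MultiVec n r)
    (T : {S : Finset (Fin (n + 1)) // S.card = r + 1}) :
    vWedge y X T = ∑ a ∈ T.1, (-1) ^ #{b ∈ T.1 | b < a} * y a * mvCoeff X (T.1.erase a) := by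
  rw [vWedge, ← sum_attach T.1]
  refine sum_congr rfl fun a _ => ?_
  rw [mvCoeff, dif_pos (by rw [card_erase_of_mem a.2, T.2]; omega)]

lemma mvCoeff_vWedge_pair (y : Fin (n + 1) → ℝ) (X : MultiVec n 1) {i j : Fin (n + 1)}
    (hij : i < j) :
    mvCoeff (vWedge y X) {i, j} = y i * mvCoeff X {j} - y j * mvCoeff X {i} := by
  rw [mvCoeff, dif_pos (card_pair hij.ne), vWedge_apply, sum_pair hij.ne]
  simp [filter_insert, filter_singleton, hij, hij.not_gt, hij.ne, erase_insert_of_ne]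
  ring

lemma mvCoeff_vWedge_triple (y : Fin (n + 1) → ℝ) (X : MultiVec n 2) {i j k : Fin (n + 1)}
    (hij : i < j) (hjk : j < k) :
    mvCoeff (vWedge y X) {i, j, k}
      = y i * mvCoeff X {j, k} - y j * mvCoeff X {i, k} + y k * mvCoeff X {i, j} := by
  have hik := hij.trans hjk
  have hc : ({i, j, k} : Finset (Fin (n + 1))).card = 3 := by
    rw [card_insert_of_notMem (by simp [hij.ne, hik.ne]), card_pair hjk.ne]
  rw [mvCoeff, dif_pos hc, vWedge_apply, sum_insert (by simp [hij.ne, hik.ne]), sum_pair hjk.ne]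
  simp [filter_insert, filter_singleton, hij, hjk, hik, hij.not_gt, hjk.not_gt, hik.not_gt,
    hij.ne, hjk.ne, hik.ne, erase_insert_of_ne]
  ring

lemma vWedge_smul (u : Fin (n + 1) → ℝ) (c : ℝ) (X : MultiVec n r) :
    vWedge u (c • X) = c • vWedge u X := by
  ext T
  simp only [vWedge, Pi.smul_apply, smul_eq_mul, mul_sum]
  exact sum_congr rfl fun _ _ => by ring

lemma vecToMulti_apply_of_eq (w : Fin (n + 1) → ℝ) (S : {S : Finset (Fin (n + 1)) // S.card = 1})
    {a : Fin (n + 1)} (hS : S.1 = {a}) : vecToMulti w S = w a := by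
  rw [vecToMulti, hS, sum_singleton]

lemma mvCoeff_vecToMulti (w : Fin (n + 1) → ℝ) (a : Fin (n + 1)) :
    mvCoeff (vecToMulti w) {a} = w a := by
  rw [mvCoeff, dif_pos (card_singleton a), vecToMulti, sum_singleton]

lemma vecToMulti_eq_zero_iff (w : Fin (n + 1) → ℝ) : vecToMulti w = 0 ↔ w = 0 := by
  refine ⟨fun h => funext fun a => ?_, fun h => funext fun S => by simp [vecToMulti, h]⟩
  simpa [mvCoeff_vecToMulti] using congrArg (mvCoeff · {a}) h

lemma vecToMulti_smul (c : ℝ) (w : Fin (n + 1) → ℝ) : vecToMulti (c • w) = c • vecToMulti w := by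
  ext S; simp [vecToMulti, mul_sum]

lemma abs_le_mvNorm_vecToMulti (w : Fin (n + 1) → ℝ) (a : Fin (n + 1)) :
    |w a| ≤ mvNorm (vecToMulti w) := by
  simpa [mvCoeff_vecToMulti] using abs_mvCoeff_le_mvNorm (vecToMulti w) {a}

lemma mvNorm_vecToMulti_le (w : Fin (n + 1) → ℝ) {B : ℝ} (hB : 0 ≤ B) (h : ∀ a, |w a| ≤ B) :
    mvNorm (vecToMulti w) ≤ 2 ^ (n + 1) * B := by
  refine mvNorm_le_of_forall_abs_le _ hB fun S => ?_
  obtain ⟨a, ha⟩ := card_eq_one.mp S.2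
  rw [vecToMulti_apply_of_eq w S ha]
  exact h a

def wedge (u w : Fin (n + 1) → ℝ) : MultiVec n 2 := vWedge u (vecToMulti w)

lemma mvCoeff_wedge (u w : Fin (n + 1) → ℝ) {i j : Fin (n + 1)} (hij : i < j) :
    mvCoeff (wedge u w) {i, j} = u i * w j - u j * w i := by
  rw [wedge, mvCoeff_vWedge_pair _ _ hij, mvCoeff_vecToMulti, mvCoeff_vecToMulti]

section Estimates

variable (u x z : Fin (n + 1) → ℝ) {E : ℝ}

lemma mvNorm_wedge_le_of_near {B : ℝ} (hE : ∀ a, |z a - z 0 * u a| ≤ E) (hu : ∀ a, |u a| ≤ B) :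
    mvNorm (wedge u z) ≤ 2 ^ (n + 1) * (2 * B * E) := by
  have hB : 0 ≤ B := (abs_nonneg _).trans (hu 0)
  refine mvNorm_le_of_forall_pair _ (by nlinarith [(abs_nonneg _).trans (hE 0)]) fun i j hij => ?_
  rw [mvCoeff_wedge _ _ hij,
    show u i * z j - u j * z i = u i * (z j - z 0 * u j) - u j * (z i - z 0 * u i) by ring]
  refine (abs_sub _ _).trans ?_
  rw [abs_mul, abs_mul]
  nlinarith [mul_le_mul (hu i) (hE j) (abs_nonneg _) hB, mul_le_mul (hu j) (hE i) (abs_nonneg _) hB]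

lemma mvNorm_wedge_le {T N : ℝ} (hE : ∀ a, |z a - z 0 * u a| ≤ E) (hz : |z 0| ≤ T)
    (hx : ∀ a, |x a| ≤ N) :
    mvNorm (wedge x z) ≤ 2 ^ (n + 1) * (T * mvNorm (wedge u x) + 2 * N * E) := by
  have hN : 0 ≤ N := (abs_nonneg _).trans (hx 0)
  have hM : ∀ i j, i < j → |x i * u j - x j * u i| ≤ mvNorm (wedge u x) := fun i j hij => by
    simpa [mvCoeff_wedge _ _ hij, abs_sub_comm, mul_comm] using
      abs_mvCoeff_le_mvNorm (wedge u x) {i, j}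
  have hB : 0 ≤ T * mvNorm (wedge u x) + 2 * N * E :=
    add_nonneg (mul_nonneg ((abs_nonneg _).trans hz) (mvNorm_nonneg _))
      (mul_nonneg (mul_nonneg zero_le_two hN) ((abs_nonneg _).trans (hE 0)))
  refine mvNorm_le_of_forall_pair _ hB fun i j hij => ?_
  rw [mvCoeff_wedge _ _ hij, show x i * z j - x j * z i
    = z 0 * (x i * u j - x j * u i) + (x i * (z j - z 0 * u j) - x j * (z i - z 0 * u i)) by ring]
  refine (abs_add_le _ _).trans (add_le_add ?_ ((abs_sub _ _).trans ?_))
  · rw [abs_mul]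
    exact mul_le_mul hz (hM i j hij) (abs_nonneg _) ((abs_nonneg _).trans hz)
  · rw [abs_mul, abs_mul]
    nlinarith [mul_le_mul (hx i) (hE j) (abs_nonneg _) hN,
      mul_le_mul (hx j) (hE i) (abs_nonneg _) hN]

lemma mvNorm_vWedge_wedge_le (hE : ∀ a, |z a - z 0 * u a| ≤ E) :
    mvNorm (vWedge u (wedge x z)) ≤ 2 ^ (n + 1) * (3 * E * mvNorm (wedge u x)) := by
  have hE0 : 0 ≤ E := (abs_nonneg _).trans (hE 0)
  have hM : ∀ i j, i < j → |u i * x j - u j * x i| ≤ mvNorm (wedge u x) := fun i j hij => by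
    simpa [mvCoeff_wedge _ _ hij] using abs_mvCoeff_le_mvNorm (wedge u x) {i, j}
  refine mvNorm_le_of_forall_triple _ (by nlinarith [mvNorm_nonneg (wedge u x)])
    fun i j k hij hjk => ?_
  have hik := hij.trans hjk
  rw [mvCoeff_vWedge_triple _ _ hij hjk, mvCoeff_wedge _ _ hjk, mvCoeff_wedge _ _ hik,
    mvCoeff_wedge _ _ hij]
  -- `u ∧ x ∧ u = 0`, so only the deviations `z - z 0 • u` contribute
  rw [show u i * (x j * z k - x k * z j) - u j * (x i * z k - x k * z i)
      + u k * (x i * z j - x j * z i)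
      = (z i - z 0 * u i) * (u j * x k - u k * x j) + (z j - z 0 * u j) * -(u i * x k - u k * x i)
        + (z k - z 0 * u k) * (u i * x j - u j * x i) by ring]
  refine (abs_add_three _ _ _).trans ?_
  simp only [abs_mul, abs_neg]
  nlinarith [mul_le_mul (hE i) (hM j k hjk) (abs_nonneg _) hE0,
    mul_le_mul (hE j) (hM i k hik) (abs_nonneg _) hE0,
    mul_le_mul (hE k) (hM i j hij) (abs_nonneg _) hE0]

end Estimates

def castVec (x : Fin (n + 1) → ℤ) : Fin (n + 1) → ℝ := fun i => x i

@[simp] lemma castVec_apply (x : Fin (n + 1) → ℤ) (i : Fin (n + 1)) : castVec x i = x i := rfl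

lemma castVec_smul (g : ℤ) (x : Fin (n + 1) → ℤ) : castVec (g • x) = (g : ℝ) • castVec x := by
  ext i; simp

lemma castVec_eq_zero_iff (x : Fin (n + 1) → ℤ) : castVec x = 0 ↔ x = 0 := by
  simp [funext_iff]

lemma mvIntegral_vecToMulti (x : Fin (n + 1) → ℤ) : mvIntegral (vecToMulti (castVec x)) := by
  intro S
  obtain ⟨a, ha⟩ := card_eq_one.mp S.2
  exact ⟨x a, vecToMulti_apply_of_eq _ S ha⟩

lemma exists_eq_vecToMulti_castVec {X : MultiVec n 1} (hX : mvIntegral X) :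
    ∃ x : Fin (n + 1) → ℤ, X = vecToMulti (castVec x) := by
  choose k hk using hX
  refine ⟨fun a => k ⟨{a}, card_singleton a⟩, funext fun S => ?_⟩
  obtain ⟨a, ha⟩ := card_eq_one.mp S.2
  rw [vecToMulti_apply_of_eq _ S ha, castVec_apply, ← hk,
    show S = ⟨{a}, card_singleton a⟩ from Subtype.ext ha]

lemma mvCoeff_wedge_castVec (x z : Fin (n + 1) → ℤ) {i j : Fin (n + 1)} (hij : i < j) :
    mvCoeff (wedge (castVec x) (castVec z)) {i, j} = ((x i * z j - x j * z i : ℤ) : ℝ) := by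
  rw [mvCoeff_wedge _ _ hij]; push_cast; rfl

lemma mvIntegral_wedge (x z : Fin (n + 1) → ℤ) : mvIntegral (wedge (castVec x) (castVec z)) := by
  intro S
  obtain ⟨i, j, hij, hS⟩ := exists_lt_of_card_eq_two S.2
  exact ⟨_, by rw [← mvCoeff_val (wedge _ _) S, hS, mvCoeff_wedge_castVec x z hij]⟩

lemma exists_eq_smul_gcd_eq_one {ι : Type*} [Fintype ι] [Nonempty ι] {x : ι → ℤ} (hx : x ≠ 0) :
    ∃ g : ℤ, 0 < g ∧ ∃ ξ : ι → ℤ, x = g • ξ ∧ univ.gcd ξ = 1 := by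
  obtain ⟨ξ, hxξ, hξ⟩ := extract_gcd x univ_nonempty
  have hg : univ.gcd x ≠ 0 := fun h => hx (funext fun i => gcd_eq_zero_iff.mp h i (mem_univ i))
  exact ⟨_, (Int.nonneg_of_normalize_eq_self normalize_gcd).lt_of_ne' hg, ξ,
    funext fun i => hxξ i (mem_univ i), hξ⟩

lemma vecToMulti_castVec_ne_zero {ξ : Fin (n + 1) → ℤ} (hξ : univ.gcd ξ = 1) :
    vecToMulti (castVec ξ) ≠ 0 := by
  rw [Ne, vecToMulti_eq_zero_iff, castVec_eq_zero_iff]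
  rintro rfl
  exact one_ne_zero (hξ.symm.trans (gcd_eq_zero_iff.mpr fun _ _ => rfl))

lemma dvd_of_forall_dvd_mul {ι : Type*} {s : Finset ι} {ξ : ι → ℤ} (hξ : s.gcd ξ = 1) {d w : ℤ}
    (h : ∀ i ∈ s, d ∣ w * ξ i) : d ∣ w := by
  have := dvd_gcd h
  rwa [Finset.gcd_mul_left, hξ, mul_one, dvd_normalize_iff] at this

lemma wedge_castVec_ne_zero {ξ z : Fin (n + 1) → ℤ} (hξ : univ.gcd ξ = 1) (hz : z ≠ 0)
    {p : Fin (n + 1)} (hp : |z p| < |ξ p|) : wedge (castVec ξ) (castVec z) ≠ 0 := by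
  intro h0
  have hminor : ∀ i j, ξ i * z j = ξ j * z i := by
    have : ∀ i j, i < j → ξ i * z j = ξ j * z i := fun i j hij => by
      have := mvCoeff_wedge_castVec ξ z hij
      rwa [h0, mvCoeff_zero, eq_comm, Int.cast_eq_zero, sub_eq_zero] at this
    intro i j
    rcases lt_trichotomy i j with hij | rfl | hij
    · exact this i j hij
    · rfl
    · exact (this j i hij).symm
  have hξp : ξ p ≠ 0 := by rintro h; rw [h, abs_zero] at hp; exact (abs_nonneg _).not_gt hp
  obtain ⟨m, hm⟩ : ξ p ∣ z p := dvd_of_forall_dvd_mul hξ fun i _ => ⟨z i, by linarith [hminor i p]⟩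
  have hzm : z = m • ξ := funext fun a => mul_left_cancel₀ hξp
    (by rw [Pi.smul_apply, smul_eq_mul, hminor p a, hm]; ring)
  have hm0 : m ≠ 0 := by rintro rfl; exact hz (by simpa using hzm)
  rw [hm, abs_mul] at hp
  nlinarith [Int.one_le_abs hm0, abs_nonneg (ξ p)]

lemma _root_.LinearIndependent.int_coeff_eq_zero {ι : Type*} {k : ℕ} {v : ι → ℝ}
    (hv : LinearIndependent ℚ v) {f : Fin k → ι} (hf : Function.Injective f) (c : Fin k → ℤ)
    (h : ∑ j, (c j : ℝ) * v (f j) = 0) : c = 0 := by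
  have := Fintype.linearIndependent_iff.mp (hv.comp f hf) (fun j => (c j : ℚ))
    (by simpa [Rat.smul_def] using h)
  exact funext fun j => by exact_mod_cast this j

section Irrational

variable {θ : Fin n → ℝ}

@[simp] lemma yTheta_zero : yTheta θ 0 = 1 := rfl

@[simp] lemma yTheta_succ (i : Fin n) : yTheta θ i.succ = θ i := rfl

lemma int_relation_pair (hθ : LinearIndependent ℚ (yTheta θ)) {a b : Fin (n + 1)}
    (hab : a ≠ b) {ka kb : ℤ} (h : ka * yTheta θ a + kb * yTheta θ b = 0) : ka = 0 ∧ kb = 0 := by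
  have := hθ.int_coeff_eq_zero (f := ![a, b])
    (by simp [Function.Injective, Fin.forall_fin_two, hab, hab.symm]) ![ka, kb] (by simpa using h)
  simpa [funext_iff, Fin.forall_fin_two] using this

lemma int_relation_triple (hθ : LinearIndependent ℚ (yTheta θ)) {a b c : Fin (n + 1)}
    (hab : a < b) (hbc : b < c) {ka kb kc : ℤ}
    (h : ka * yTheta θ a + kb * yTheta θ b + kc * yTheta θ c = 0) : ka = 0 ∧ kb = 0 ∧ kc = 0 := by
  have hac := hab.trans hbc
  have := hθ.int_coeff_eq_zero (f := ![a, b, c])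
    (by simp [Function.Injective, Fin.forall_fin_succ, hab.ne, hab.ne', hbc.ne, hbc.ne', hac.ne,
      hac.ne'])
    ![ka, kb, kc] (by simpa [Fin.sum_univ_three, add_assoc] using h)
  simpa [funext_iff, Fin.forall_fin_succ] using this

lemma vWedge_yTheta_ne_zero_of_one (hθ : LinearIndependent ℚ (yTheta θ)) (hn : 0 < n)
    {X : MultiVec n 1} (hX : mvIntegral X) (hX0 : X ≠ 0) : vWedge (yTheta θ) X ≠ 0 := by
  intro h
  have key : ∀ b : Fin n, mvCoeff X {0} = 0 ∧ mvCoeff X {b.succ} = 0 := by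
    intro b
    obtain ⟨k₀, hk₀⟩ := exists_int_mvCoeff_eq hX {0}
    obtain ⟨k₁, hk₁⟩ := exists_int_mvCoeff_eq hX {b.succ}
    have hrel := mvCoeff_vWedge_pair (yTheta θ) X (Fin.succ_pos b)
    rw [h, mvCoeff_zero, hk₀, hk₁] at hrel
    obtain ⟨h₁, h₀⟩ := int_relation_pair hθ (Fin.succ_ne_zero b).symm (ka := k₁) (kb := -k₀)
      (by push_cast; linarith)
    simp [hk₀, hk₁, h₁, neg_eq_zero.mp h₀]
  refine hX0 (eq_zero_of_forall_mvCoeff_eq_zero fun S => ?_)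
  obtain ⟨a, ha⟩ := card_eq_one.mp S.2
  rw [ha]
  induction a using Fin.cases with
  | zero => exact (key ⟨0, hn⟩).1
  | succ b => exact (key b).2

lemma vWedge_yTheta_ne_zero_of_two (hθ : LinearIndependent ℚ (yTheta θ)) (hn : 2 ≤ n)
    {Y : MultiVec n 2} (hY : mvIntegral Y) (hY0 : Y ≠ 0) : vWedge (yTheta θ) Y ≠ 0 := by
  intro h
  have key : ∀ a b c, a < b → b < c →
      mvCoeff Y {b, c} = 0 ∧ mvCoeff Y {a, c} = 0 ∧ mvCoeff Y {a, b} = 0 := by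
    intro a b c hab hbc
    obtain ⟨k₁, hk₁⟩ := exists_int_mvCoeff_eq hY {b, c}
    obtain ⟨k₂, hk₂⟩ := exists_int_mvCoeff_eq hY {a, c}
    obtain ⟨k₃, hk₃⟩ := exists_int_mvCoeff_eq hY {a, b}
    have hrel := mvCoeff_vWedge_triple (yTheta θ) Y hab hbc
    rw [h, mvCoeff_zero, hk₁, hk₂, hk₃] at hrel
    obtain ⟨h₁, h₂, h₃⟩ := int_relation_triple hθ hab hbc (ka := k₁) (kb := -k₂) (kc := k₃)
      (by push_cast; linarith)
    simp [hk₁, hk₂, hk₃, h₁, neg_eq_zero.mp h₂, h₃]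
  refine hY0 (eq_zero_of_forall_mvCoeff_eq_zero fun S => ?_)
  obtain ⟨p, q, hpq, hS⟩ := exists_lt_of_card_eq_two S.2
  obtain ⟨i, -, hi⟩ := exists_mem_notMem_of_card_lt_card (s := {p, q}) (t := univ)
    (by rw [card_pair hpq.ne, card_univ, Fintype.card_fin]; omega)
  rw [mem_insert, mem_singleton, not_or] at hi
  rw [hS]
  rcases lt_or_gt_of_ne hi.1 with hip | hpi
  · exact (key i p q hip hpq).1
  rcases lt_or_gt_of_ne hi.2 with hiq | hqi
  · exact (key p i q hpi hiq).2.1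
  · exact (key p q i hpq hqi).2.2

end Irrational

lemma _root_.Set.infinite_of_forall_exists_pos_lt {α : Type*} {s : Set α} (f : α → ℝ)
    (h : ∀ c > 0, ∃ x ∈ s, 0 < f x ∧ f x < c) : s.Infinite := by
  intro hs
  obtain ⟨x₁, hx₁, hpos₁, -⟩ := h 1 one_pos
  obtain ⟨x₀, ⟨hx₀, hpos₀⟩, hmin⟩ :=
    Set.exists_min_image {x ∈ s | 0 < f x} f (hs.subset (Set.sep_subset _ _)) ⟨x₁, hx₁, hpos₁⟩
  obtain ⟨x, hx, hpos, hlt⟩ := h (f x₀) hpos₀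
  exact (hmin x ⟨hx, hpos⟩).not_gt hlt

lemma self_mul_rpow_neg {N : ℝ} (hN : 0 < N) (a : ℝ) : N * N ^ (-a) = N ^ (1 - a) := by
  rw [sub_eq_add_neg, Real.rpow_add hN, Real.rpow_one]

lemma eventually_mul_rpow_neg_lt (C : ℝ) {a c : ℝ} (ha : 0 < a) (hc : 0 < c) :
    ∀ᶠ N : ℝ in atTop, C * N ^ (-a) < c := by
  have : Tendsto (fun N : ℝ => C * N ^ (-a)) atTop (nhds 0) := by
    simpa using (tendsto_rpow_neg_atTop ha).const_mul C
  exact this.eventually_lt_const hc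

lemma eventually_le_rpow_neg {a b v C₁ C₂ : ℝ} (ha : 0 < a) (hC₂ : 0 < C₂) (h : v * b < a) :
    ∀ᶠ N : ℝ in atTop, ∀ Q S : ℝ, Q ≤ C₁ * N ^ (-a) → 1 ≤ S → S ≤ C₂ * N ^ b → Q ≤ S ^ (-v) := by
  filter_upwards [eventually_mul_rpow_neg_lt C₁ ha one_pos,
    eventually_mul_rpow_neg_lt C₁ (sub_pos.mpr h) (Real.rpow_pos_of_pos hC₂ (-v)),
    eventually_gt_atTop 0] with N h₁ h₂ hN Q S hQ hS₁ hS
  rcases le_or_gt 0 v with hv | hv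
  · calc Q ≤ C₁ * N ^ (-a) := hQ
      _ = C₁ * N ^ (-(a - v * b)) * N ^ (b * -v) := by
        rw [mul_assoc, ← Real.rpow_add hN]; ring_nf
      _ ≤ C₂ ^ (-v) * (N ^ b) ^ (-v) := by
        rw [Real.rpow_mul hN.le]; gcongr
      _ = (C₂ * N ^ b) ^ (-v) := (Real.mul_rpow hC₂.le (Real.rpow_nonneg hN.le b)).symm
      _ ≤ S ^ (-v) := Real.rpow_le_rpow_of_nonpos (by positivity) hS (by linarith)
  · exact hQ.trans (h₁.le.trans (Real.one_le_rpow hS₁ (by linarith)))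

lemma transfer_exponent_lt {ω w α β : ℝ} (hω : -1 ≤ ω) (hωα : ω < α) (hwβ : w < β)
    (hw : w < 1) : (ω + w) / (1 - w) * (1 - β) < α + β := by
  have h1w : 0 < 1 - w := by linarith
  set v := (ω + w) / (1 - w)
  have hv : v * (1 - w) = ω + w := div_mul_cancel₀ _ h1w.ne'
  have h1v : 0 ≤ 1 + v := by
    have : 1 + v = (1 + ω) / (1 - w) := by simp only [v]; field_simp; ring
    rw [this]; exact div_nonneg (by linarith) h1w.le
  nlinarith [mul_le_mul_of_nonneg_right hwβ.le h1v]

section Exponents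

variable (θ : Fin n → ℝ)

def approxSet (d : ℕ) (ω : ℝ) : Set (MultiVec n (d + 1)) :=
  {X | mvIntegral X ∧ X ≠ 0 ∧ mvNorm (vWedge (yTheta θ) X) ≤ mvNorm X ^ (-ω)}

def HasUniformApprox (w : ℝ) : Prop :=
  ∀ᶠ T : ℝ in atTop, ∃ z : Fin (n + 1) → ℤ, z ≠ 0 ∧ (∀ j, |(z j : ℝ)| ≤ T) ∧
    ∀ i : Fin n, |(z 0 : ℝ) * θ i - (z i.succ : ℝ)| ≤ T ^ (-w)

variable {θ}

lemma exists_lt_infinite_approxSet {d : ℕ} {ω : ℝ} (h : (ω : EReal) < omegaExp n θ d) :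
    ∃ ω' > ω, (approxSet θ d ω').Infinite := by
  obtain ⟨_, ⟨ω', rfl, hinf⟩, hlt⟩ := lt_sSup_iff.mp h
  exact ⟨ω', EReal.coe_lt_coe_iff.mp hlt, hinf⟩

lemma coe_le_omegaExp {d : ℕ} {ω : ℝ} (h : (approxSet θ d ω).Infinite) :
    (ω : EReal) ≤ omegaExp n θ d :=
  le_sSup ⟨ω, rfl, h⟩

lemma exists_lt_hasUniformApprox {w : ℝ} (h : (w : EReal) < omegaHat0 n θ) :
    ∃ w' > w, HasUniformApprox θ w' := by
  obtain ⟨_, ⟨w', rfl, hw'⟩, hlt⟩ := lt_sSup_iff.mp h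
  exact ⟨w', EReal.coe_lt_coe_iff.mp hlt, hw'⟩

lemma HasUniformApprox.mono {w w' : ℝ} (h : HasUniformApprox θ w) (hw : w' ≤ w) :
    HasUniformApprox θ w' := by
  filter_upwards [h, eventually_ge_atTop 1] with T ⟨z, hz, hzT, hzθ⟩ hT
  exact ⟨z, hz, hzT, fun i => (hzθ i).trans (Real.rpow_le_rpow_of_exponent_le hT (by linarith))⟩

lemma abs_sub_mul_yTheta_le {z : Fin (n + 1) → ℤ} {E : ℝ} (hE : 0 ≤ E)
    (h : ∀ i : Fin n, |(z 0 : ℝ) * θ i - (z i.succ : ℝ)| ≤ E) (a : Fin (n + 1)) :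
    |castVec z a - castVec z 0 * yTheta θ a| ≤ E := by
  induction a using Fin.cases with
  | zero => simpa using hE
  | succ i => rw [abs_sub_comm]; simpa using h i

end Exponents

section Construction

variable {θ : Fin n → ℝ}

lemma exists_gcd_eq_one_mem_approxSet (hθ : LinearIndependent ℚ (yTheta θ)) (hn : 0 < n)
    {α : ℝ} (hα : 0 < α) (hA : (approxSet θ 0 α).Infinite) (B : ℝ) :
    ∃ ξ : Fin (n + 1) → ℤ, univ.gcd ξ = 1 ∧ vecToMulti (castVec ξ) ∈ approxSet θ 0 α ∧
      B < mvNorm (vecToMulti (castVec ξ)) := by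
  set P := {X ∈ approxSet θ 0 α | ∃ ξ, univ.gcd ξ = 1 ∧ X = vecToMulti (castVec ξ)}
  suffices hP : P.Infinite by
    obtain ⟨_, ⟨hX, ξ, hξ, rfl⟩, hB⟩ := exists_lt_mvNorm_of_infinite hP (fun X hX => hX.1.1) B
    exact ⟨ξ, hξ, hX, hB⟩
  -- `ξ = x / gcd x` is still good, and `|y ∧ ξ| ≤ |y ∧ x|` tends to `0` along good points `x`
  refine Set.infinite_of_forall_exists_pos_lt (fun X => mvNorm (vWedge (yTheta θ) X))
    fun c hc => ?_
  obtain ⟨B₀, hB₀⟩ := eventually_atTop.mp ((tendsto_rpow_neg_atTop hα).eventually_lt_const hc)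
  obtain ⟨_, ⟨hint, hX₀, hgood⟩, hlarge⟩ := exists_lt_mvNorm_of_infinite hA (fun X hX => hX.1) B₀
  obtain ⟨x, rfl⟩ := exists_eq_vecToMulti_castVec hint
  have hx0 : x ≠ 0 := by rwa [Ne, vecToMulti_eq_zero_iff, castVec_eq_zero_iff] at hX₀
  obtain ⟨g, hg, ξ, rfl, hξ⟩ := exists_eq_smul_gcd_eq_one hx0
  have hX := vecToMulti_castVec_ne_zero hξ
  have hg1 : (1 : ℝ) ≤ g := by exact_mod_cast hg
  have hnorm : mvNorm (vecToMulti (castVec ξ)) ≤ mvNorm (vecToMulti (castVec (g • ξ))) := by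
    rw [castVec_smul, vecToMulti_smul]
    exact mvNorm_le_mvNorm_smul _ hg1
  have hwedge : mvNorm (vWedge (yTheta θ) (vecToMulti (castVec ξ)))
      ≤ mvNorm (vWedge (yTheta θ) (vecToMulti (castVec (g • ξ)))) := by
    rw [castVec_smul, vecToMulti_smul, vWedge_smul]
    exact mvNorm_le_mvNorm_smul _ hg1
  refine ⟨vecToMulti (castVec ξ), ⟨⟨mvIntegral_vecToMulti ξ, hX, ?_⟩, ξ, hξ, rfl⟩,
    mvNorm_pos (vWedge_yTheta_ne_zero_of_one hθ hn (mvIntegral_vecToMulti ξ) hX),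
    hwedge.trans_lt (hgood.trans_lt (hB₀ _ hlarge.le))⟩
  exact hwedge.trans
    (hgood.trans (Real.rpow_le_rpow_of_nonpos (mvNorm_pos hX) hnorm (by linarith)))

lemma infinite_approxSet_zero_of_hasUniformApprox (hθ : LinearIndependent ℚ (yTheta θ))
    (hn : 0 < n) {w γ : ℝ} (hU : HasUniformApprox θ w) (hγ : 0 < γ) (hγw : γ < w) :
    (approxSet θ 0 γ).Infinite := by
  obtain ⟨p, hp⟩ := Finite.exists_max fun a => |yTheta θ a|
  set C : ℝ := 2 ^ (n + 1) * (2 * |yTheta θ p|)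
  have hw : 0 < w := hγ.trans hγw
  -- `ξ = x / gcd x` is still good, and `|y ∧ ξ| ≤ |y ∧ x|` tends to `0` along good points `x`
  refine Set.infinite_of_forall_exists_pos_lt (fun X => mvNorm (vWedge (yTheta θ) X))
    fun c hc => ?_
  obtain ⟨T, ⟨z, hz, hzT, hzθ⟩, hle, hlt, hT⟩ := (hU.and
    ((eventually_le_rpow_neg (C₁ := C) (b := 1) (v := γ) hw (C₂ := 2 ^ (n + 1)) (by positivity)
      (by linarith)).and ((eventually_mul_rpow_neg_lt C hw hc).and (eventually_ge_atTop 1)))).exists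
  have hX : vecToMulti (castVec z) ≠ 0 := by rwa [Ne, vecToMulti_eq_zero_iff, castVec_eq_zero_iff]
  have hsmall : mvNorm (vWedge (yTheta θ) (vecToMulti (castVec z))) ≤ C * T ^ (-w) := by
    have := mvNorm_wedge_le_of_near (yTheta θ) (castVec z)
      (abs_sub_mul_yTheta_le (by positivity) hzθ) hp
    rw [wedge] at this
    linarith
  have hsize : mvNorm (vecToMulti (castVec z)) ≤ 2 ^ (n + 1) * T ^ (1 : ℝ) := by
    rw [Real.rpow_one]
    exact mvNorm_vecToMulti_le _ (by linarith) hzT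
  exact ⟨_, ⟨mvIntegral_vecToMulti z, hX,
    hle _ _ hsmall (one_le_mvNorm (mvIntegral_vecToMulti z) hX) hsize⟩,
    mvNorm_pos (vWedge_yTheta_ne_zero_of_one hθ hn (mvIntegral_vecToMulti z) hX),
    hsmall.trans_lt hlt⟩

lemma exists_wedge_ne_zero_near_yTheta {β T₀ : ℝ} (hβ : 0 < β)
    (hU : ∀ T ≥ T₀, ∃ z : Fin (n + 1) → ℤ, z ≠ 0 ∧ (∀ j, |(z j : ℝ)| ≤ T) ∧
      ∀ i : Fin n, |(z 0 : ℝ) * θ i - (z i.succ : ℝ)| ≤ T ^ (-β))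
    {ξ : Fin (n + 1) → ℤ} (hξ : univ.gcd ξ = 1)
    (hN : 2 * 2 ^ (n + 1) * T₀ ≤ mvNorm (vecToMulti (castVec ξ))) :
    ∃ z : Fin (n + 1) → ℤ, wedge (castVec ξ) (castVec z) ≠ 0 ∧
      |castVec z 0| ≤ mvNorm (vecToMulti (castVec ξ)) ∧
      ∀ a, |castVec z a - castVec z 0 * yTheta θ a|
        ≤ (2 * 2 ^ (n + 1)) ^ β * mvNorm (vecToMulti (castVec ξ)) ^ (-β) := by
  set D : ℝ := 2 ^ (n + 1)
  set N := mvNorm (vecToMulti (castVec ξ))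
  have hD : 0 < D := by positivity
  have hN1 : 1 ≤ N := one_le_mvNorm (mvIntegral_vecToMulti ξ) (vecToMulti_castVec_ne_zero hξ)
  obtain ⟨p, hp⟩ := Finite.exists_max fun a => |(ξ a : ℝ)|
  have hNp : N ≤ D * |(ξ p : ℝ)| := mvNorm_vecToMulti_le (castVec ξ) (abs_nonneg _) hp
  have hpN : |(ξ p : ℝ)| ≤ N := abs_le_mvNorm_vecToMulti (castVec ξ) p
  have hp0 : 0 < |(ξ p : ℝ)| := pos_of_mul_pos_right (by linarith) hD.le
  -- `z` is taken at scale `|ξ|_∞ / 2`, so that it cannot be a multiple of `ξ`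
  set T := |(ξ p : ℝ)| / 2 with hT
  have hNT : N / (2 * D) ≤ T := by
    rw [div_le_div_iff₀ (by positivity) two_pos]; linarith
  have hT₀ : T₀ ≤ N / (2 * D) := by rw [le_div_iff₀ (by positivity)]; linarith
  obtain ⟨z, hz, hzT, hzθ⟩ := hU T (hT₀.trans hNT)
  have hTE : T ^ (-β) ≤ (2 * D) ^ β * N ^ (-β) := by
    calc T ^ (-β) ≤ (N / (2 * D)) ^ (-β) :=
          Real.rpow_le_rpow_of_nonpos (by positivity) hNT (by linarith)
      _ = (2 * D) ^ β * N ^ (-β) := by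
          rw [Real.div_rpow (by positivity) (by positivity),
            Real.rpow_neg (by positivity : (0 : ℝ) ≤ 2 * D), div_inv_eq_mul, mul_comm]
  refine ⟨z, wedge_castVec_ne_zero hξ hz (p := p) ?_, (hzT 0).trans (by linarith),
    abs_sub_mul_yTheta_le (by positivity) fun i => (hzθ i).trans hTE⟩
  have : |(z p : ℝ)| < |(ξ p : ℝ)| := by linarith [hzT p]
  exact_mod_cast this

lemma exists_wedge_bounds (hθ : LinearIndependent ℚ (yTheta θ)) (hn : 2 ≤ n) {β T₀ : ℝ}
    (hβ : 0 < β) (hU : ∀ T ≥ T₀, ∃ z : Fin (n + 1) → ℤ, z ≠ 0 ∧ (∀ j, |(z j : ℝ)| ≤ T) ∧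
      ∀ i : Fin n, |(z 0 : ℝ) * θ i - (z i.succ : ℝ)| ≤ T ^ (-β)) :
    ∃ C > 0, ∀ ξ : Fin (n + 1) → ℤ, univ.gcd ξ = 1 →
      2 * 2 ^ (n + 1) * T₀ ≤ mvNorm (vecToMulti (castVec ξ)) →
      ∃ Y : MultiVec n 2, mvIntegral Y ∧ Y ≠ 0 ∧ vWedge (yTheta θ) Y ≠ 0 ∧
        mvNorm (vWedge (yTheta θ) Y) ≤ C * mvNorm (vecToMulti (castVec ξ)) ^ (-β) *
          mvNorm (wedge (yTheta θ) (castVec ξ)) ∧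
        mvNorm Y ≤ C * (mvNorm (vecToMulti (castVec ξ)) * mvNorm (wedge (yTheta θ) (castVec ξ))
          + mvNorm (vecToMulti (castVec ξ)) ^ (1 - β)) := by
  refine ⟨3 * 2 ^ (n + 1) * (1 + (2 * 2 ^ (n + 1)) ^ β), by positivity, fun ξ hξ hN₀ => ?_⟩
  obtain ⟨z, hY, hz0, hE⟩ := exists_wedge_ne_zero_near_yTheta hβ hU hξ hN₀
  set D : ℝ := 2 ^ (n + 1)
  set K : ℝ := (2 * D) ^ β
  set N := mvNorm (vecToMulti (castVec ξ))
  set M := mvNorm (wedge (yTheta θ) (castVec ξ))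
  have hK : 0 < K := by positivity
  have hN : 0 < N := mvNorm_pos (vecToMulti_castVec_ne_zero hξ)
  have hM : 0 ≤ M := mvNorm_nonneg _
  refine ⟨_, mvIntegral_wedge ξ z, hY, vWedge_yTheta_ne_zero_of_two hθ hn (mvIntegral_wedge ξ z) hY,
    (mvNorm_vWedge_wedge_le _ _ _ hE).trans ?_,
    (mvNorm_wedge_le _ _ _ hE hz0 (abs_le_mvNorm_vecToMulti _)).trans ?_⟩
  · have : 0 ≤ D * N ^ (-β) * M := by positivity
    nlinarith
  · change D * (N * M + 2 * N * (K * N ^ (-β))) ≤ _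
    have hNK : N * (K * N ^ (-β)) = K * N ^ (1 - β) := by rw [← self_mul_rpow_neg hN]; ring
    rw [mul_assoc 2 N, hNK]
    have : 0 ≤ D * N * M := by positivity
    have : 0 ≤ D * N ^ (1 - β) := by positivity
    nlinarith [mul_nonneg hK.le this]

lemma infinite_approxSet_one (hθ : LinearIndependent ℚ (yTheta θ)) (hn : 2 ≤ n) {α β v : ℝ}
    (hβ : 0 < β) (hβα : β ≤ α) (hv : v * (1 - β) < α + β)
    (hA : (approxSet θ 0 α).Infinite) (hU : HasUniformApprox θ β) :
    (approxSet θ 1 v).Infinite := by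
  obtain ⟨T₀, hT₀⟩ := eventually_atTop.mp hU
  obtain ⟨C, hC, hwedge⟩ := exists_wedge_bounds hθ hn hβ hT₀
  refine Set.infinite_of_forall_exists_pos_lt (fun Y => mvNorm (vWedge (yTheta θ) Y)) fun c hc => ?_
  obtain ⟨N₀, hN₀⟩ := eventually_atTop.mp
    ((eventually_le_rpow_neg (C₁ := C) (C₂ := 2 * C) (by linarith) (by positivity) hv).and
      ((eventually_mul_rpow_neg_lt C (a := α + β) (by linarith) hc).and
        (eventually_ge_atTop (max 1 (2 * 2 ^ (n + 1) * T₀)))))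
  obtain ⟨ξ, hξ, ⟨-, -, hgood⟩, hN⟩ :=
    exists_gcd_eq_one_mem_approxSet hθ (by omega) (hβ.trans_le hβα) hA N₀
  set N := mvNorm (vecToMulti (castVec ξ))
  obtain ⟨hle, hlt, hbig⟩ := hN₀ N hN.le
  have hN1 : 1 ≤ N := (le_max_left _ _).trans hbig
  obtain ⟨Y, hint, hY, hyY, hsmall, hsize⟩ := hwedge ξ hξ ((le_max_right _ _).trans hbig)
  change _ ≤ C * N ^ (-β) * mvNorm (vWedge (yTheta θ) (vecToMulti (castVec ξ))) at hsmall
  change _ ≤ C * (N * mvNorm (vWedge (yTheta θ) (vecToMulti (castVec ξ))) + N ^ (1 - β)) at hsize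
  have hsmall' : mvNorm (vWedge (yTheta θ) Y) ≤ C * N ^ (-(α + β)) := by
    calc _ ≤ C * N ^ (-β) * N ^ (-α) := hsmall.trans (by gcongr)
      _ = C * N ^ (-(α + β)) := by
        rw [mul_assoc, ← Real.rpow_add (by linarith)]; ring_nf
  have hsize' : mvNorm Y ≤ 2 * C * N ^ (1 - β) := by
    calc _ ≤ C * (N * N ^ (-α) + N ^ (1 - β)) := hsize.trans (by gcongr)
      _ ≤ C * (N ^ (1 - β) + N ^ (1 - β)) := by
        rw [self_mul_rpow_neg (by linarith)]
        gcongr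
      _ = 2 * C * N ^ (1 - β) := by ring
  exact ⟨Y, ⟨hint, hY, hle _ _ hsmall' (one_le_mvNorm hint hY) hsize'⟩, mvNorm_pos hyY,
    hsmall'.trans_lt hlt⟩

end Construction

end GoingUp

open GoingUp

/-- **Going-up transfer, inequality (2.2).** For `Θ ∈ ℝⁿ` (`n ≥ 2`) with `1, θ₁, …, θₙ`
linearly independent over `ℚ`: for all reals `ω, w_hat` with `-1 ≤ ω < ω_0(Θ)` and
`0 < w_hat < min(1, ω̂_0(Θ))`, one has `ω_1(Θ) ≥ (ω + w_hat)/(1 - w_hat)`. -/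
theorem going_up_transfer_refined (n : ℕ) (hn : 2 ≤ n) (θ : Fin n → ℝ)
    (hθ : LinearIndependent ℚ (Fin.cons (1 : ℝ) θ))
    (ω w_hat : ℝ) (hω1 : -1 ≤ ω) (hω : (ω : EReal) < omegaExp n θ 0)
    (hw_hat0 : 0 < w_hat) (hw_hat1 : w_hat < 1) (hw_hat : (w_hat : EReal) < omegaHat0 n θ) :
    (((ω + w_hat) / (1 - w_hat) : ℝ) : EReal) ≤ omegaExp n θ 1 := by
  obtain ⟨ω₁, hωω₁, hA⟩ := exists_lt_infinite_approxSet hω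
  obtain ⟨w₁, hw₁, hU⟩ := exists_lt_hasUniformApprox hw_hat
  obtain ⟨β, hβ⟩ := exists_between hw₁
  have hAα : (approxSet θ 0 (max ω₁ β)).Infinite := by
    rcases max_choice ω₁ β with h | h <;> rw [h]
    · exact hA
    · exact infinite_approxSet_zero_of_hasUniformApprox hθ (by omega) hU (by linarith) hβ.2
  refine coe_le_omegaExp (infinite_approxSet_one hθ hn (by linarith) (le_max_right _ _) ?_ hAα
    (hU.mono hβ.2.le))
  exact transfer_exponent_lt hω1 (hωω₁.trans_le (le_max_left _ _)) hβ.1 hw_hat1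
end
end

section
/- (Going-down transfer, inequality (2.4).) Suppose n ≥ 2. For all real numbers ω and ŵ with 0 < ω < ω_{n−1}(Θ) and 1 < ŵ < ω̂_{n−1}(Θ), one has ω_{n−2}(Θ) ≥ (ŵ − 1)ω/(ω + ŵ); in particular ω_{n−2}(Θ) ≥ ((ω̂_{n−1}(Θ) − 1)ω_{n−1}(Θ))/(ω_{n−1}(Θ) + ω̂_{n−1}(Θ)). -/
open scoped BigOperators Pointwise

noncomputable section

/-!
Codimension-one integer multivectors are Hodge duals of integer vectors `u`, with
`|y ∧ X| = |⟨y, u⟩|`; so `ω_{n-1}` is the exponent of the linear form `⟨y, ·⟩`, and it is at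
least `ω̂_{n-1}`. Take a primitive `u` with `D = |⟨y, u⟩|` small and `|u| ≤ D^{-1/ω}`, and a
uniform solution `x` at height `H = 2 D^{-1/ŵ}`, so that `|x| ≤ H` and `|⟨y, x⟩| < D`; this
forces `x` and `u` to be independent. Then `Y = ⋆(x ∧ u)` is a nonzero integer multivector of
degree `n - 1` with `|Y| ≪ H |u| ≪ D^{-1/ŵ - 1/ω}` and, by `y ⌟ (x ∧ u) = ⟨y, x⟩ u - ⟨y, u⟩ x`,
`0 < |y ∧ Y| ≪ D H ≪ D^{1 - 1/ŵ}`. Hence `|y ∧ Y| ≤ |Y|^{-v}` for `v < (ŵ - 1) ω / (ω + ŵ)` as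
soon as `D` is small, and letting `D → 0` gives infinitely many such `Y`.
-/

namespace GoingDown

open Finset Filter Topology

section SumSq

variable {ι : Type*} [Fintype ι]

lemma abs_le_sqrt_sum_sq (f : ι → ℝ) (i : ι) : |f i| ≤ √(∑ j, f j ^ 2) :=
  Real.abs_le_sqrt (single_le_sum (f := fun j => f j ^ 2) (fun _ _ => sq_nonneg _) (mem_univ i))

lemma one_le_sqrt_sum_sq {f : ι → ℝ} (hf : ∀ i, ∃ k : ℤ, f i = k) (h : f ≠ 0) :
    1 ≤ √(∑ j, f j ^ 2) := by
  obtain ⟨i, hi⟩ := Function.ne_iff.mp h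
  obtain ⟨k, hk⟩ := hf i
  have hk0 : k ≠ 0 := by rintro rfl; simp [hk] at hi
  calc (1 : ℝ) ≤ |(k : ℝ)| := by exact_mod_cast Int.one_le_abs hk0
    _ = |f i| := by rw [hk]
    _ ≤ _ := abs_le_sqrt_sum_sq f i

lemma sqrt_sum_sq_le_card_mul {f : ι → ℝ} {B : ℝ} (hB : 0 ≤ B) (hf : ∀ i, |f i| ≤ B) :
    √(∑ j, f j ^ 2) ≤ Fintype.card ι * B := by
  rw [← Real.sqrt_sq (by positivity : (0 : ℝ) ≤ Fintype.card ι * B)]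
  refine Real.sqrt_le_sqrt ?_
  have hcard : (Fintype.card ι : ℝ) ≤ (Fintype.card ι : ℝ) ^ 2 := by
    exact_mod_cast Nat.le_self_pow two_ne_zero _
  calc ∑ j, f j ^ 2 ≤ ∑ _j : ι, B ^ 2 :=
        sum_le_sum fun j _ => sq_le_sq' (abs_le.mp (hf j)).1 (abs_le.mp (hf j)).2
    _ = Fintype.card ι * B ^ 2 := by simp
    _ ≤ (Fintype.card ι : ℝ) ^ 2 * B ^ 2 := by gcongr
    _ = (Fintype.card ι * B) ^ 2 := by ring

end SumSq

variable {n : ℕ}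

section Norms

variable {r : ℕ}

lemma abs_le_mvNorm (X : MultiVec n r) (S : {S : Finset (Fin (n + 1)) // S.card = r}) :
    |X S| ≤ mvNorm X :=
  abs_le_sqrt_sum_sq X S

lemma one_le_mvNorm {X : MultiVec n r} (hX : mvIntegral X) (h : X ≠ 0) : 1 ≤ mvNorm X :=
  one_le_sqrt_sum_sq hX h

lemma mvNorm_le {X : MultiVec n r} {B : ℝ} (hB : 0 ≤ B) (hX : ∀ S, |X S| ≤ B) :
    mvNorm X ≤ 2 ^ (n + 1) * B := by
  have hcard : Fintype.card {S : Finset (Fin (n + 1)) // S.card = r} ≤ 2 ^ (n + 1) := by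
    simpa using Fintype.card_subtype_le (fun S : Finset (Fin (n + 1)) => S.card = r)
  refine (sqrt_sum_sq_le_card_mul hB hX).trans ?_
  gcongr
  exact_mod_cast hcard

lemma abs_le_vNorm (x : Fin (n + 1) → ℝ) (i : Fin (n + 1)) : |x i| ≤ vNorm x :=
  abs_le_sqrt_sum_sq x i

lemma one_le_vNorm {v : Fin (n + 1) → ℤ} (hv : v ≠ 0) :
    1 ≤ vNorm (Int.cast ∘ v : Fin (n + 1) → ℝ) :=
  one_le_sqrt_sum_sq (fun i => ⟨v i, rfl⟩) (by simpa [funext_iff] using hv)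

lemma vNorm_le {x : Fin (n + 1) → ℝ} {B : ℝ} (hB : 0 ≤ B) (hx : ∀ i, |x i| ≤ B) :
    vNorm x ≤ 2 ^ (n + 1) * B := by
  refine (sqrt_sum_sq_le_card_mul hB hx).trans ?_
  gcongr
  rw [Fintype.card_fin]
  exact_mod_cast (Nat.lt_two_pow_self (n := n + 1)).le

end Norms

section Exponents

variable (y : Fin (n + 1) → ℝ)

/-- `omegaExp n θ d` is the supremum of the `ω` for which `approxSet (yTheta θ) (d + 1) ω` is
infinite. -/
def approxSet (r : ℕ) (ω : ℝ) : Set (MultiVec n r) :=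
  {X | mvIntegral X ∧ X ≠ 0 ∧ mvNorm (vWedge y X) ≤ mvNorm X ^ (-ω)}

def dotSet (ω : ℝ) : Set (Fin (n + 1) → ℤ) :=
  {v | v ≠ 0 ∧ |y ⬝ᵥ (Int.cast ∘ v)| ≤ vNorm (Int.cast ∘ v : Fin (n + 1) → ℝ) ^ (-ω)}

/-- `omegaHatLast n θ` is the supremum of the `W` with `IsUniformExp (yTheta θ) W`. -/
def IsUniformExp (W : ℝ) : Prop :=
  ∀ᶠ H : ℝ in atTop, ∃ x : Fin (n + 1) → ℤ, x ≠ 0 ∧ (∀ j, |(x j : ℝ)| ≤ H) ∧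
    |y ⬝ᵥ (Int.cast ∘ x)| ≤ H ^ (-W)

variable {y}

lemma dotProduct_intCast_ne_zero (hy : LinearIndependent ℚ y) {v : Fin (n + 1) → ℤ}
    (hv : v ≠ 0) : y ⬝ᵥ (Int.cast ∘ v) ≠ 0 := by
  intro h
  have h0 : ∑ i, (v i : ℚ) • y i = 0 := by
    simpa [dotProduct, Rat.smul_def, mul_comm] using h
  exact hv (funext fun i => by exact_mod_cast Fintype.linearIndependent_iff.mp hy _ h0 i)

lemma IsUniformExp.mono {W W' : ℝ} (hW : IsUniformExp y W) (hW' : W' ≤ W) :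
    IsUniformExp y W' := by
  filter_upwards [hW, eventually_ge_atTop 1] with H ⟨x, hx0, hxH, hxd⟩ hH
  exact ⟨x, hx0, hxH, hxd.trans (Real.rpow_le_rpow_of_exponent_le hH (by linarith))⟩

end Exponents

lemma yTheta_dotProduct (θ : Fin n → ℝ) (x : Fin (n + 1) → ℤ) :
    yTheta θ ⬝ᵥ (Int.cast ∘ x) = (x 0 : ℝ) + ∑ i : Fin n, (x i.succ : ℝ) * θ i := by
  simp [dotProduct, Fin.sum_univ_succ, yTheta, mul_comm]

lemma exists_infinite_approxSet_of_lt_omegaExp {θ : Fin n → ℝ} {d : ℕ} {ω : ℝ}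
    (h : (ω : EReal) < omegaExp n θ d) :
    ∃ ω' : ℝ, ω < ω' ∧ (approxSet (yTheta θ) (d + 1) ω').Infinite := by
  obtain ⟨_, ⟨ω', rfl, hω'⟩, hlt⟩ := lt_sSup_iff.mp h
  exact ⟨ω', EReal.coe_lt_coe_iff.mp hlt, hω'⟩

lemma le_omegaExp_of_infinite {θ : Fin n → ℝ} {d : ℕ} {ω : ℝ}
    (h : (approxSet (yTheta θ) (d + 1) ω).Infinite) : (ω : EReal) ≤ omegaExp n θ d :=
  le_sSup ⟨ω, rfl, h⟩

lemma exists_isUniformExp_of_lt_omegaHatLast {θ : Fin n → ℝ} {w : ℝ}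
    (h : (w : EReal) < omegaHatLast n θ) : ∃ W : ℝ, w < W ∧ IsUniformExp (yTheta θ) W := by
  obtain ⟨_, ⟨W, rfl, hW⟩, hlt⟩ := lt_sSup_iff.mp h
  refine ⟨W, EReal.coe_lt_coe_iff.mp hlt, ?_⟩
  simpa only [IsUniformExp, yTheta_dotProduct] using hW

def complSingleton (c : Fin (n + 1)) : {S : Finset (Fin (n + 1)) // S.card = n} :=
  ⟨{c}ᶜ, by simp [card_compl]⟩

lemma complSingleton_bijective : Function.Bijective (complSingleton (n := n)) := by
  refine ⟨fun a b h => singleton_injective (compl_injective (congrArg Subtype.val h)), ?_⟩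
  intro S
  obtain ⟨c, hc⟩ := card_eq_one.mp (by simp [card_compl, S.2] : (S.1ᶜ).card = 1)
  exact ⟨c, Subtype.ext (by simp only [complSingleton, ← hc, compl_compl])⟩

/-- The Hodge dual of a codimension-one multivector: `y ∧ X = (y ⬝ᵥ dualVec X) e₀ ∧ ⋯ ∧ eₙ`. -/
def dualVec (X : MultiVec n n) : Fin (n + 1) → ℝ :=
  fun c => (-1) ^ (c : ℕ) * X (complSingleton c)

lemma dualVec_injective : Function.Injective (dualVec (n := n)) := by
  intro X X' h
  funext S
  obtain ⟨c, rfl⟩ := complSingleton_bijective.2 S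
  simpa [dualVec] using congrFun h c

lemma exists_dualVec_eq_intCast {X : MultiVec n n} (hX : mvIntegral X) :
    ∃ v : Fin (n + 1) → ℤ, dualVec X = Int.cast ∘ v := by
  choose k hk using hX
  exact ⟨fun c => (-1) ^ (c : ℕ) * k (complSingleton c), funext fun c => by simp [dualVec, hk]⟩

lemma vNorm_dualVec (X : MultiVec n n) : vNorm (dualVec X) = mvNorm X := by
  unfold vNorm mvNorm
  congr 1
  refine Fintype.sum_bijective _ complSingleton_bijective _ _ fun c => ?_
  simp [dualVec, mul_pow, ← pow_mul, pow_mul']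

lemma mvNorm_of_card_eq (Z : MultiVec n (n + 1)) : mvNorm Z = |Z ⟨univ, by simp⟩| := by
  rw [mvNorm, Fintype.sum_eq_single, Real.sqrt_sq_eq_abs]
  intro S hS
  exact absurd (Subtype.ext (eq_univ_of_card _ (by simp [S.2]))) hS

lemma vWedge_apply_univ (y : Fin (n + 1) → ℝ) (X : MultiVec n n) :
    vWedge y X ⟨univ, by simp⟩ = y ⬝ᵥ dualVec X := by
  calc vWedge y X ⟨univ, by simp⟩
      = ∑ i, (-1 : ℝ) ^ #{j | j < i} * y i * X ⟨univ.erase i, by simp⟩ :=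
        sum_attach univ (fun i => (-1 : ℝ) ^ #{j | j < i} * y i * X ⟨univ.erase i, by simp⟩)
    _ = y ⬝ᵥ dualVec X := by
        refine sum_congr rfl fun i _ => ?_
        rw [filter_gt_eq_Iio, Fin.card_Iio, dualVec, complSingleton]
        simp only [compl_singleton]
        ring

lemma mvNorm_vWedge_eq_abs_dotProduct (y : Fin (n + 1) → ℝ) (X : MultiVec n n) :
    mvNorm (vWedge y X) = |y ⬝ᵥ dualVec X| := by
  rw [mvNorm_of_card_eq, vWedge_apply_univ]

lemma infinite_dotSet_of_infinite_approxSet {y : Fin (n + 1) → ℝ} {ω : ℝ}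
    (h : (approxSet y n ω).Infinite) : (dotSet y ω).Infinite := by
  have himg : dualVec '' approxSet y n ω ⊆ (Int.cast ∘ ·) '' dotSet y ω := by
    rintro _ ⟨X, ⟨hXi, hX0, hXw⟩, rfl⟩
    obtain ⟨v, hv⟩ := exists_dualVec_eq_intCast hXi
    refine ⟨v, ⟨?_, ?_⟩, hv.symm⟩
    · rintro rfl
      exact hX0 (dualVec_injective (by rw [hv]; funext c; simp [dualVec]))
    · rwa [← hv, vNorm_dualVec, ← mvNorm_vWedge_eq_abs_dotProduct]
  exact (((Set.infinite_image_iff dualVec_injective.injOn).mpr h).mono himg).of_image _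

lemma infinite_of_forall_exists_pos_lt {α : Type*} {S : Set α} (f : α → ℝ)
    (h : ∀ ε > 0, ∃ a ∈ S, 0 < f a ∧ f a < ε) : S.Infinite := by
  intro hS
  have hT : ((f '' S) ∩ Set.Ioi 0)ᶜ ∈ 𝓝 (0 : ℝ) :=
    ((hS.image f).inter_of_left _).isClosed.compl_mem_nhds fun h => lt_irrefl _ (Set.mem_Ioi.mp h.2)
  obtain ⟨ε, hε, hball⟩ := Metric.mem_nhds_iff.mp hT
  obtain ⟨a, ha, hpos, hlt⟩ := h ε hε
  exact hball (by simp [abs_of_pos hpos, hlt]) ⟨⟨a, ha, rfl⟩, hpos⟩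

section DotSet

variable {y : Fin (n + 1) → ℝ}

lemma infinite_dotSet_of_isUniformExp (hy : LinearIndependent ℚ y) {W s : ℝ}
    (hW : IsUniformExp y W) (hs : 0 ≤ s) (hsW : s < W) : (dotSet y s).Infinite := by
  refine infinite_of_forall_exists_pos_lt (fun v => |y ⬝ᵥ (Int.cast ∘ v)|) fun ε hε => ?_
  have hsmall : ∀ᶠ H : ℝ in atTop, H ^ (-W) < ε :=
    (tendsto_rpow_neg_atTop (hs.trans_lt hsW)).eventually (gt_mem_nhds hε)
  have hlarge : ∀ᶠ H : ℝ in atTop, ((2 : ℝ) ^ (n + 1)) ^ s ≤ H ^ (W - s) :=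
    (tendsto_rpow_atTop (sub_pos.2 hsW)).eventually_ge_atTop _
  obtain ⟨H, ⟨x, hx0, hxH, hxd⟩, hH1, hHε, hHK⟩ :=
    (hW.and ((eventually_ge_atTop 1).and (hsmall.and hlarge))).exists
  have hH0 : 0 < H := one_pos.trans_le hH1
  have hHs : H ^ (-W) ≤ (2 ^ (n + 1) * H) ^ (-s) := by
    rw [Real.rpow_neg hH0.le, Real.rpow_neg (by positivity), Real.mul_rpow (by positivity) hH0.le]
    gcongr
    calc _ ≤ H ^ (W - s) * H ^ s := by gcongr
      _ = H ^ W := by rw [← Real.rpow_add hH0, sub_add_cancel]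
  have hxd' : |y ⬝ᵥ (Int.cast ∘ x)| ≤ vNorm (Int.cast ∘ x : Fin (n + 1) → ℝ) ^ (-s) :=
    calc _ ≤ H ^ (-W) := hxd
      _ ≤ (2 ^ (n + 1) * H) ^ (-s) := hHs
      _ ≤ _ := Real.rpow_le_rpow_of_nonpos (one_pos.trans_le (one_le_vNorm hx0))
          (vNorm_le hH0.le hxH) (neg_nonpos.mpr hs)
  exact ⟨x, ⟨hx0, hxd'⟩, abs_pos.mpr (dotProduct_intCast_ne_zero hy hx0), hxd.trans_lt hHε⟩

lemma finite_setOf_vNorm_le (R : ℝ) :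
    {v : Fin (n + 1) → ℤ | vNorm (Int.cast ∘ v : Fin (n + 1) → ℝ) ≤ R}.Finite := by
  refine (Set.finite_Icc (fun _ => -⌈R⌉) (fun _ => ⌈R⌉)).subset fun v hv => ?_
  have hv' : ∀ i, |v i| ≤ ⌈R⌉ := fun i => by
    have : |(v i : ℝ)| ≤ ⌈R⌉ := ((abs_le_vNorm _ i).trans hv).trans (Int.le_ceil R)
    exact_mod_cast this
  exact ⟨fun i => (abs_le.mp (hv' i)).1, fun i => (abs_le.mp (hv' i)).2⟩

lemma vNorm_smul {c : ℝ} (hc : 0 ≤ c) (x : Fin (n + 1) → ℝ) : vNorm (c • x) = c * vNorm x := by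
  simp only [vNorm, Pi.smul_apply, smul_eq_mul, mul_pow, ← mul_sum]
  rw [Real.sqrt_mul (sq_nonneg c), Real.sqrt_sq hc]

lemma exists_primitive_mem_dotSet {ω : ℝ} (hω : 0 ≤ ω) {v : Fin (n + 1) → ℤ}
    (hv : v ∈ dotSet y ω) : ∃ u ∈ dotSet y ω, univ.gcd u = 1 ∧
      |y ⬝ᵥ (Int.cast ∘ u)| ≤ |y ⬝ᵥ (Int.cast ∘ v)| := by
  obtain ⟨u, hvu, hu⟩ := extract_gcd v univ_nonempty
  set g := univ.gcd v
  have hg0 : g ≠ 0 := fun h => hv.1 (funext fun i => gcd_eq_zero_iff.mp h i (mem_univ i))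
  have hg1 : (1 : ℝ) ≤ g := by
    have := Int.nonneg_of_normalize_eq_self (normalize_gcd (s := univ) (f := v))
    exact_mod_cast (show 1 ≤ g by omega)
  have hvu' : (Int.cast ∘ v : Fin (n + 1) → ℝ) = (g : ℝ) • (Int.cast ∘ u) :=
    funext fun i => by simp [hvu i (mem_univ i)]
  have hu0 : u ≠ 0 := by
    rintro rfl
    exact hv.1 (funext fun i => by simpa using hvu i (mem_univ i))
  have hdot : |y ⬝ᵥ (Int.cast ∘ v)| = g * |y ⬝ᵥ (Int.cast ∘ u)| := by
    rw [hvu', dotProduct_smul, smul_eq_mul, abs_mul, abs_of_pos (one_pos.trans_le hg1)]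
  have hdot_le : |y ⬝ᵥ (Int.cast ∘ u)| ≤ |y ⬝ᵥ (Int.cast ∘ v)| := by
    rw [hdot]
    exact le_mul_of_one_le_left (abs_nonneg _) hg1
  refine ⟨u, ⟨hu0, ?_⟩, hu, hdot_le⟩
  have hQ := one_le_vNorm hu0
  calc |y ⬝ᵥ (Int.cast ∘ u)| ≤ |y ⬝ᵥ (Int.cast ∘ v)| := hdot_le
    _ ≤ vNorm (Int.cast ∘ v : Fin (n + 1) → ℝ) ^ (-ω) := hv.2
    _ = (g : ℝ) ^ (-ω) * vNorm (Int.cast ∘ u : Fin (n + 1) → ℝ) ^ (-ω) := by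
        rw [hvu', vNorm_smul (by linarith), Real.mul_rpow (by linarith) (by linarith)]
    _ ≤ vNorm (Int.cast ∘ u : Fin (n + 1) → ℝ) ^ (-ω) :=
        mul_le_of_le_one_left (by positivity)
          (Real.rpow_le_one_of_one_le_of_nonpos hg1 (neg_nonpos.mpr hω))

lemma exists_primitive_mem_dotSet_abs_lt (hy : LinearIndependent ℚ y) {ω : ℝ} (hω : 0 < ω)
    (h : (dotSet y ω).Infinite) {δ : ℝ} (hδ : 0 < δ) :
    ∃ u ∈ dotSet y ω, univ.gcd u = 1 ∧ 0 < |y ⬝ᵥ (Int.cast ∘ u)| ∧ |y ⬝ᵥ (Int.cast ∘ u)| < δ := by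
  obtain ⟨v, hv, hvR⟩ := h.exists_notMem_finite (finite_setOf_vNorm_le (δ ^ (-ω⁻¹)))
  obtain ⟨u, hu, hgcd, hle⟩ := exists_primitive_mem_dotSet hω.le hv
  refine ⟨u, hu, hgcd, abs_pos.mpr (dotProduct_intCast_ne_zero hy hu.1), hle.trans_lt ?_⟩
  calc _ ≤ vNorm (Int.cast ∘ v : Fin (n + 1) → ℝ) ^ (-ω) := hv.2
    _ < (δ ^ (-ω⁻¹)) ^ (-ω) :=
        Real.rpow_lt_rpow_of_neg (by positivity) (not_le.mp hvR) (neg_lt_zero.mpr hω)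
    _ = δ := by rw [← Real.rpow_mul hδ.le, neg_mul_neg, inv_mul_cancel₀ hω.ne', Real.rpow_one]

end DotSet

def pairMinor (x u : Fin (n + 1) → ℝ) (A : Finset (Fin (n + 1))) : ℝ :=
  ∑ a ∈ A, ∑ b ∈ A, if a < b then (-1) ^ ((a : ℕ) + b) * (x a * u b - x b * u a) else 0

lemma pairMinor_pair (x u : Fin (n + 1) → ℝ) {a b : Fin (n + 1)} (hab : a < b) :
    pairMinor x u {a, b} = (-1) ^ ((a : ℕ) + b) * (x a * u b - x b * u a) := by
  simp [pairMinor, sum_pair hab.ne, hab, not_lt_of_gt hab]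

/-- The Hodge dual of `x ∧ u`: if `Sᶜ = {a, b}` with `a < b`, the coordinate at `S` is
`±(x a * u b - x b * u a)`, the only nonzero term of `pairMinor`. -/
def dualWedge (x u : Fin (n + 1) → ℝ) : MultiVec n (n - 1) :=
  fun S => pairMinor x u S.1ᶜ

lemma mvIntegral_dualWedge (x u : Fin (n + 1) → ℤ) :
    mvIntegral (dualWedge (Int.cast ∘ x : Fin (n + 1) → ℝ) (Int.cast ∘ u)) := fun S =>
  ⟨∑ a ∈ S.1ᶜ, ∑ b ∈ S.1ᶜ, if a < b then (-1) ^ ((a : ℕ) + b) * (x a * u b - x b * u a) else 0,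
    by simp [dualWedge, pairMinor, apply_ite (Int.cast : ℤ → ℝ)]⟩

lemma abs_pairMinor_le {x u : Fin (n + 1) → ℝ} {H Q : ℝ} (hx : ∀ j, |x j| ≤ H)
    (hu : ∀ j, |u j| ≤ Q) {a b : Fin (n + 1)} (hab : a < b) :
    |pairMinor x u {a, b}| ≤ 2 * H * Q := by
  have hH : 0 ≤ H := (abs_nonneg _).trans (hx a)
  rw [pairMinor_pair x u hab, abs_mul, abs_pow, abs_neg, abs_one, one_pow, one_mul]
  calc |x a * u b - x b * u a| ≤ |x a| * |u b| + |x b| * |u a| := by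
        simpa only [abs_mul] using abs_sub (x a * u b) (x b * u a)
    _ ≤ H * Q + H * Q := by gcongr <;> simp_all
    _ = 2 * H * Q := by ring

lemma mvNorm_dualWedge_le (hn : 1 ≤ n) {x u : Fin (n + 1) → ℝ} {H Q : ℝ}
    (hx : ∀ j, |x j| ≤ H) (hu : ∀ j, |u j| ≤ Q) :
    mvNorm (dualWedge x u) ≤ 2 ^ (n + 1) * (2 * H * Q) := by
  have hH : 0 ≤ H := (abs_nonneg _).trans (hx 0)
  have hQ : 0 ≤ Q := (abs_nonneg _).trans (hu 0)
  refine mvNorm_le (by positivity) fun S => ?_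
  obtain ⟨a, b, hab, hS⟩ := card_eq_two.mp (by simp [card_compl, S.2]; omega : (S.1ᶜ).card = 2)
  rw [dualWedge, hS]
  rcases hab.lt_or_gt with h | h
  · exact abs_pairMinor_le hx hu h
  · rw [pair_comm]; exact abs_pairMinor_le hx hu h

lemma sign_mul_pairMinor (x u : Fin (n + 1) → ℝ) {c i : Fin (n + 1)} (hic : i ≠ c) :
    (-1 : ℝ) ^ #{j ∈ {c}ᶜ | j < i} * pairMinor x u {i, c} =
      (-1) ^ (c : ℕ) * (x i * u c - x c * u i) := by
  have hfilter : ({j ∈ {c}ᶜ | j < i} : Finset (Fin (n + 1))) = (Iio i).erase c := by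
    ext j; simp
  have hsq : ∀ k : ℕ, (-1 : ℝ) ^ k * (-1) ^ k = 1 := fun k => by
    rw [← pow_add, Even.neg_one_pow ⟨k, rfl⟩]
  rcases hic.lt_or_gt with h | h
  · rw [hfilter, erase_eq_of_notMem (by simpa using not_lt.mpr h.le), Fin.card_Iio,
      pairMinor_pair x u h, pow_add]
    linear_combination ((-1) ^ (c : ℕ) * (x i * u c - x c * u i)) * hsq i
  · rw [hfilter, card_erase_of_mem (by simpa using h), Fin.card_Iio, pair_comm,
      pairMinor_pair x u h]
    obtain ⟨k, hk⟩ : ∃ k, (i : ℕ) = k + 1 := ⟨i - 1, by have : (c : ℕ) < i := h; omega⟩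
    rw [hk, Nat.add_sub_cancel, pow_add, pow_add]
    linear_combination (-(-1) ^ (c : ℕ) * (x c * u i - x i * u c)) * hsq k

/-- Under Hodge duality this is `y ⌟ (x ∧ u) = ⟨y, x⟩ u - ⟨y, u⟩ x`. -/
lemma vWedge_dualWedge_apply (y x u : Fin (n + 1) → ℝ) (c : Fin (n + 1))
    (hc : ({c}ᶜ : Finset (Fin (n + 1))).card = n - 1 + 1) :
    vWedge y (dualWedge x u) ⟨{c}ᶜ, hc⟩ =
      (-1) ^ (c : ℕ) * ((y ⬝ᵥ x) * u c - (y ⬝ᵥ u) * x c) := by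
  calc vWedge y (dualWedge x u) ⟨{c}ᶜ, hc⟩
      = ∑ i ∈ {c}ᶜ, (-1 : ℝ) ^ #{j ∈ {c}ᶜ | j < i} * y i *
          pairMinor x u (({c}ᶜ : Finset (Fin (n + 1))).erase i)ᶜ :=
        sum_attach _ fun i => (-1 : ℝ) ^ #{j ∈ {c}ᶜ | j < i} * y i *
          pairMinor x u (({c}ᶜ : Finset (Fin (n + 1))).erase i)ᶜ
    _ = ∑ i, (-1) ^ (c : ℕ) * (y i * (x i * u c - x c * u i)) := by
        rw [← sum_subset (subset_univ {c}ᶜ) fun i _ hi => by simp_all]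
        refine sum_congr rfl fun i hi => ?_
        rw [compl_erase, compl_compl, mul_right_comm,
          sign_mul_pairMinor x u (by simpa using hi)]
        ring
    _ = _ := by
        rw [← mul_sum]
        congr 1
        simp only [dotProduct, sum_mul, ← sum_sub_distrib]
        exact sum_congr rfl fun i _ => by ring

lemma mvNorm_vWedge_dualWedge_le (hn : 1 ≤ n) (y : Fin (n + 1) → ℝ) {x u : Fin (n + 1) → ℝ}
    {H : ℝ} (hx : ∀ j, |x j| ≤ H) (hu : ∀ j, |u j| ≤ H) (hdot : |y ⬝ᵥ x| ≤ |y ⬝ᵥ u|) :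
    mvNorm (vWedge y (dualWedge x u)) ≤ 2 ^ (n + 1) * (2 * |y ⬝ᵥ u| * H) := by
  have hH : 0 ≤ H := (abs_nonneg _).trans (hx 0)
  refine mvNorm_le (by positivity) fun ⟨T, hT⟩ => ?_
  obtain ⟨c, hc⟩ := card_eq_one.mp (by simp [card_compl, hT]; omega : Tᶜ.card = 1)
  obtain rfl : T = {c}ᶜ := by rw [← hc, compl_compl]
  rw [vWedge_dualWedge_apply, abs_mul, abs_pow, abs_neg, abs_one, one_pow, one_mul]
  calc |(y ⬝ᵥ x) * u c - (y ⬝ᵥ u) * x c| ≤ |y ⬝ᵥ x| * |u c| + |y ⬝ᵥ u| * |x c| := by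
        simpa only [abs_mul] using abs_sub ((y ⬝ᵥ x) * u c) ((y ⬝ᵥ u) * x c)
    _ ≤ |y ⬝ᵥ u| * H + |y ⬝ᵥ u| * H := by gcongr; exacts [hu c, hx c]
    _ = 2 * |y ⬝ᵥ u| * H := by ring

lemma exists_eq_smul_of_gcd_eq_one {ι : Type*} [Fintype ι] {u x : ι → ℤ}
    (hu : univ.gcd u = 1) (h : ∀ a b, x a * u b = x b * u a) : ∃ k : ℤ, x = k • u := by
  obtain ⟨j, hj⟩ : ∃ j, u j ≠ 0 := by
    by_contra! hc
    simp [gcd_eq_zero_iff.mpr fun j _ => hc j] at hu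
  obtain ⟨k, hk⟩ : u j ∣ x j := by
    have h1 : u j ∣ univ.gcd fun i => x j * u i :=
      dvd_gcd fun i _ => ⟨x i, by linear_combination h j i⟩
    rwa [Finset.gcd_mul_left, hu, mul_one, dvd_normalize_iff] at h1
  exact ⟨k, funext fun i => mul_left_cancel₀ hj (by
    simp only [Pi.smul_apply, smul_eq_mul]; linear_combination h i j + u i * hk)⟩

lemma mvNorm_vWedge_dualWedge_pos (hn : 1 ≤ n) (y : Fin (n + 1) → ℝ) {x u : Fin (n + 1) → ℤ}
    (hu : univ.gcd u = 1) (hx : x ≠ 0)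
    (hdot : |y ⬝ᵥ (Int.cast ∘ x)| < |y ⬝ᵥ (Int.cast ∘ u)|) :
    0 < mvNorm (vWedge y (dualWedge (Int.cast ∘ x : Fin (n + 1) → ℝ) (Int.cast ∘ u))) := by
  set dx := y ⬝ᵥ (Int.cast ∘ x)
  set du := y ⬝ᵥ (Int.cast ∘ u)
  have hdu : du ≠ 0 := fun h => by simp [h] at hdot; linarith [abs_nonneg dx]
  -- Otherwise `x` is proportional to `u`, hence an integer multiple of the primitive `u`,
  -- and then `|dx| ≥ |du|`.
  obtain ⟨c, hc⟩ : ∃ c, dx * u c - du * x c ≠ 0 := by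
    by_contra! hpar
    obtain ⟨k, rfl⟩ := exists_eq_smul_of_gcd_eq_one hu fun a b => by
      have : (x a * u b : ℝ) = x b * u a := mul_left_cancel₀ hdu <| by
        linear_combination (-(u b : ℝ)) * hpar a + (u a : ℝ) * hpar b
      exact_mod_cast this
    have hk : (1 : ℝ) ≤ |(k : ℝ)| := by
      exact_mod_cast Int.one_le_abs (by rintro rfl; simp at hx)
    have hdx : dx = k * du := by
      simp only [dx, du, dotProduct, mul_sum]
      exact sum_congr rfl fun i _ => by simp; ring
    rw [hdx, abs_mul] at hdot
    nlinarith [abs_pos.mpr hdu]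
  have hcard : ({c}ᶜ : Finset (Fin (n + 1))).card = n - 1 + 1 := by simp [card_compl]; omega
  calc 0 < |vWedge y (dualWedge (Int.cast ∘ x : Fin (n + 1) → ℝ) (Int.cast ∘ u))
        ⟨{c}ᶜ, hcard⟩| := by simpa [vWedge_dualWedge_apply] using hc
    _ ≤ _ := abs_le_mvNorm _ _

lemma eventually_mul_rpow_le_rpow_neg {a b v C : ℝ} (hC : 0 < C) (hv : 0 ≤ v) (hab : v * b < a) :
    ∀ᶠ D in 𝓝[>] (0 : ℝ), ∀ B, 0 < B → B ≤ C * D ^ (-b) → C * D ^ a ≤ B ^ (-v) := by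
  have hsmall : ∀ᶠ D in 𝓝[>] (0 : ℝ), D ^ (a - v * b) ≤ C ^ (-v) / C := by
    have hlim : Tendsto (fun D : ℝ => D ^ (a - v * b)) (𝓝[>] 0) (𝓝 0) :=
      (tendsto_id.mono_left nhdsWithin_le_nhds).rpow_const_nhds_zero (sub_pos.2 hab)
    exact hlim.eventually_le_const (by positivity)
  filter_upwards [hsmall, self_mem_nhdsWithin] with D hD (hD0 : 0 < D) B hB hBle
  calc C * D ^ a = C * (D ^ (a - v * b) * D ^ (v * b)) := by
        rw [← Real.rpow_add hD0, sub_add_cancel]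
    _ ≤ C * (C ^ (-v) / C * D ^ (v * b)) := by gcongr
    _ = (C * D ^ (-b)) ^ (-v) := by
        rw [Real.mul_rpow hC.le (by positivity), ← Real.rpow_mul hD0.le, neg_mul_neg, mul_comm b v]
        field_simp
    _ ≤ B ^ (-v) := Real.rpow_le_rpow_of_nonpos hB hBle (neg_nonpos.mpr hv)

section GoingDownStep

variable {y : Fin (n + 1) → ℝ}

lemma exists_dualWedge_bounds_of_primitive (hn : 1 ≤ n) {W ω D : ℝ} (hW : 0 < W) (hWω : W ≤ ω)
    {u x : Fin (n + 1) → ℤ} (hu : u ∈ dotSet y ω) (hgcd : univ.gcd u = 1)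
    (hD : |y ⬝ᵥ (Int.cast ∘ u)| = D) (hD0 : 0 < D) (hD1 : D ≤ 1) (hx0 : x ≠ 0)
    (hxH : ∀ j, |(x j : ℝ)| ≤ 2 * D ^ (-(1 / W)))
    (hxd : |y ⬝ᵥ (Int.cast ∘ x)| ≤ (2 * D ^ (-(1 / W))) ^ (-W)) :
    ∃ Y : MultiVec n (n - 1), mvIntegral Y ∧ Y ≠ 0 ∧
      mvNorm Y ≤ 4 * 2 ^ (n + 1) * D ^ (-(1 / W + 1 / ω)) ∧
      0 < mvNorm (vWedge y Y) ∧ mvNorm (vWedge y Y) ≤ 4 * 2 ^ (n + 1) * D ^ (1 - 1 / W) := by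
  have hω : 0 < ω := hW.trans_le hWω
  set H := 2 * D ^ (-(1 / W))
  set Q := vNorm (Int.cast ∘ u : Fin (n + 1) → ℝ)
  have hQ0 : 0 < Q := one_pos.trans_le (one_le_vNorm hu.1)
  have hQω : Q ≤ D ^ (-(1 / ω)) := by
    calc Q = (Q ^ (-ω)) ^ (-(1 / ω)) := by
          rw [← Real.rpow_mul hQ0.le, neg_mul_neg, mul_one_div_cancel hω.ne',
            Real.rpow_one]
      _ ≤ D ^ (-(1 / ω)) :=
          Real.rpow_le_rpow_of_nonpos hD0 (hD ▸ hu.2) (neg_nonpos.mpr (by positivity))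
  have hQH : Q ≤ H := by
    calc Q ≤ D ^ (-(1 / ω)) := hQω
      _ ≤ D ^ (-(1 / W)) := Real.rpow_le_rpow_of_exponent_ge hD0 hD1
          (neg_le_neg (one_div_le_one_div_of_le hW hWω))
      _ ≤ H := le_mul_of_one_le_left (by positivity) one_le_two
  have hxD : |y ⬝ᵥ (Int.cast ∘ x)| < |y ⬝ᵥ (Int.cast ∘ u)| := by
    calc _ ≤ H ^ (-W) := hxd
      _ = 2 ^ (-W) * D := by
          rw [Real.mul_rpow zero_le_two (by positivity), ← Real.rpow_mul hD0.le, neg_mul_neg,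
            one_div_mul_cancel hW.ne', Real.rpow_one]
      _ < D := mul_lt_of_lt_one_left hD0
          (Real.rpow_lt_one_of_one_lt_of_neg one_lt_two (neg_neg_of_pos hW))
      _ = _ := hD.symm
  have huH : ∀ j, |(u j : ℝ)| ≤ H := fun j => (abs_le_vNorm _ j).trans hQH
  have hpos := mvNorm_vWedge_dualWedge_pos hn y hgcd hx0 hxD
  refine ⟨_, mvIntegral_dualWedge x u, fun h => by simp [h, vWedge, mvNorm] at hpos, ?_, hpos, ?_⟩
  · calc _ ≤ 2 ^ (n + 1) * (2 * H * Q) := mvNorm_dualWedge_le hn hxH (abs_le_vNorm _)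
      _ ≤ 2 ^ (n + 1) * (2 * H * D ^ (-(1 / ω))) := by gcongr
      _ = _ := by rw [neg_add, Real.rpow_add hD0]; ring
  · calc _ ≤ 2 ^ (n + 1) * (2 * |y ⬝ᵥ (Int.cast ∘ u)| * H) :=
          mvNorm_vWedge_dualWedge_le hn y hxH huH hxD.le
      _ = _ := by rw [hD, sub_eq_add_neg, Real.rpow_add hD0, Real.rpow_one]; ring

theorem infinite_approxSet_sub_one_of_isUniformExp (hy : LinearIndependent ℚ y) (hn : 1 ≤ n)
    {W ω v : ℝ} (hW : IsUniformExp y W) (hW1 : 1 < W) (hWω : W ≤ ω) (hω : (dotSet y ω).Infinite)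
    (hv : 0 < v) (hvω : v < (W - 1) * ω / (ω + W)) : (approxSet y (n - 1) v).Infinite := by
  have hW0 : 0 < W := one_pos.trans hW1
  have hω0 : 0 < ω := hW0.trans_le hWω
  have hexp : v * (1 / W + 1 / ω) < 1 - 1 / W := by
    have hexp_eq : 1 - 1 / W - v * (1 / W + 1 / ω) = ((W - 1) * ω - v * (ω + W)) / (W * ω) := by
      field_simp
    rw [lt_div_iff₀ (by positivity)] at hvω
    nlinarith [div_pos (sub_pos.2 hvω) (mul_pos hW0 hω0)]
  refine infinite_of_forall_exists_pos_lt (fun Y => mvNorm (vWedge y Y)) fun ε hε => ?_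
  have hH : Tendsto (fun D : ℝ => 2 * D ^ (-(1 / W))) (𝓝[>] 0) atTop :=
    (tendsto_rpow_neg_nhdsGT_zero (neg_neg_of_pos (by positivity))).const_mul_atTop two_pos
  have hsmall : ∀ᶠ D in 𝓝[>] (0 : ℝ), 4 * 2 ^ (n + 1) * D ^ (1 - 1 / W) < ε := by
    have hlim : Tendsto (fun D : ℝ => 4 * 2 ^ (n + 1) * D ^ (1 - 1 / W)) (𝓝[>] 0) (𝓝 0) := by
      simpa using ((tendsto_id.mono_left nhdsWithin_le_nhds).rpow_const_nhds_zero
        (sub_pos.2 ((div_lt_one hW0).mpr hW1))).const_mul (4 * 2 ^ (n + 1) : ℝ)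
    exact hlim.eventually (gt_mem_nhds hε)
  have hle : ∀ᶠ D in 𝓝[>] (0 : ℝ), D ≤ 1 := nhdsWithin_le_nhds (Iic_mem_nhds one_pos)
  obtain ⟨δ, hδ, hδD⟩ := (nhdsGT_basis 0).eventually_iff.mp ((hH.eventually hW).and
    (hsmall.and ((eventually_mul_rpow_le_rpow_neg (C := 4 * 2 ^ (n + 1)) (by positivity) hv.le
      hexp).and hle)))
  obtain ⟨u, hu, hgcd, hD0, hDδ⟩ := exists_primitive_mem_dotSet_abs_lt hy hω0 hω hδ
  obtain ⟨⟨x, hx0, hxH, hxd⟩, hDε, hDexp, hD1⟩ := hδD ⟨hD0, hDδ⟩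
  obtain ⟨Y, hYint, hY0, hY, hpos, hwedge⟩ :=
    exists_dualWedge_bounds_of_primitive hn hW0 hWω hu hgcd rfl hD0 hD1 hx0 hxH hxd
  refine ⟨Y, ⟨hYint, hY0, hwedge.trans (hDexp _ ?_ hY)⟩, hpos, hwedge.trans_lt hDε⟩
  exact one_pos.trans_le (one_le_mvNorm hYint hY0)

end GoingDownStep

lemma transfer_bound_lt {a a' b b' : ℝ} (ha : 0 < a) (haa' : a ≤ a') (hb : 1 < b) (hbb' : b < b') :
    (b - 1) * a / (a + b) < (b' - 1) * a' / (a' + b') := by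
  rw [div_lt_div_iff₀ (by linarith) (by linarith)]
  nlinarith [mul_pos (mul_pos ha (ha.trans_le haa')) (sub_pos.2 hbb'),
    mul_nonneg (mul_nonneg (by linarith : (0 : ℝ) ≤ b) (sub_nonneg.2 haa'))
      (by linarith : (0 : ℝ) ≤ b' - 1),
    mul_pos (ha.trans_le haa') (sub_pos.2 hbb')]

end GoingDown

open GoingDown

/-- **Going-down transfer, inequality (2.4).** For `Θ ∈ ℝⁿ` (`n ≥ 2`) with
`1, θ₁, …, θₙ` linearly independent over `ℚ`: for all reals `ω, w_hat` with
`0 < ω < ω_{n-1}(Θ)` and `1 < w_hat < ω̂_{n-1}(Θ)`, one has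
`ω_{n-2}(Θ) ≥ (w_hat - 1)ω/(ω + w_hat)`. -/
theorem going_down_transfer_refined (n : ℕ) (hn : 2 ≤ n) (θ : Fin n → ℝ)
    (hθ : LinearIndependent ℚ (Fin.cons (1 : ℝ) θ))
    (ω w_hat : ℝ) (hω0 : 0 < ω) (hω : (ω : EReal) < omegaExp n θ (n - 1))
    (hw_hat1 : 1 < w_hat) (hw_hat : (w_hat : EReal) < omegaHatLast n θ) :
    ((((w_hat - 1) * ω / (ω + w_hat)) : ℝ) : EReal) ≤ omegaExp n θ (n - 2) := by
  have hn1 : 1 ≤ n := by omega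
  obtain ⟨ω₁, hωω₁, hω₁⟩ := exists_infinite_approxSet_of_lt_omegaExp hω
  rw [Nat.sub_add_cancel hn1] at hω₁
  obtain ⟨W, hwW, hW⟩ := exists_isUniformExp_of_lt_omegaHatLast hw_hat
  obtain ⟨s, hws, hsW⟩ := exists_between hwW
  have hdot : (dotSet (yTheta θ) (max ω₁ s)).Infinite := by
    rcases max_choice ω₁ s with h | h <;> rw [h]
    · exact infinite_dotSet_of_infinite_approxSet hω₁
    · exact infinite_dotSet_of_isUniformExp hθ hW (by linarith) hsW
  have hY := infinite_approxSet_sub_one_of_isUniformExp hθ hn1 (hW.mono hsW.le) (by linarith)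
    (le_max_right ω₁ s) hdot (div_pos (mul_pos (by linarith) hω0) (by linarith))
    (transfer_bound_lt hω0 (hωω₁.le.trans (le_max_left _ _)) hw_hat1 hws)
  rw [show n - 1 = n - 2 + 1 by omega] at hY
  exact le_omegaExp_of_infinite hY
end
end

section
/- (Corollary 2.) For every integer d with 0 ≤ d ≤ n − 1, one has ω_d(Θ) ≥ (d+1)/(n−d). -/
open scoped BigOperators Pointwise

noncomputable section

/-!
Dirichlet's box principle. Prescribe the integer coordinates `X_S`, `0 ∈ S`, of
`X ∈ Λ^{d+1}(ℤ^{n+1})` in `[0, H]`. For `0 ∉ V` the coordinate `(y ∧ X)_{{0} ∪ V}` is `X_V`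
plus a real linear form in them, so choosing the integers `X_V` by the pigeonhole principle
applied to the `C(n, d+1)` fractional parts of these forms gives `X ≠ 0` with `|X_S| ≤ H` for
`0 ∈ S` and `|(y ∧ X)_T| < 1/m` for `0 ∈ T`, provided `m ^ C(n, d+1) < (H + 1) ^ C(n, d)`.
The relation `y ∧ (y ∧ X) = 0` bounds the remaining coordinates, so `|X| ≪ H ≈ m ^ ((n-d)/(d+1))`
and `|y ∧ X| ≪ 1/m`. Since `1, θ₁, …, θₙ` are linearly independent over `ℚ`, `y ∧ X ≠ 0`, so
infinitely many distinct `X` arise.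
-/

open Finset Filter

theorem exists_ne_zero_abs_sub_lt_of_pow_card_lt {ι κ : Type*} [Fintype ι] [Fintype κ]
    (L : (ι → ℤ) →+ (κ → ℝ)) {m H : ℕ} (hm : 0 < m)
    (hcard : m ^ Fintype.card κ < (H + 1) ^ Fintype.card ι) :
    ∃ x : ι → ℤ, x ≠ 0 ∧ (∀ i, |x i| ≤ H) ∧ ∃ p : κ → ℤ, ∀ k, |L x k - p k| < 1 / m := by
  classical
  have hm' : (0 : ℝ) < m := by exact_mod_cast hm
  let lift : (ι → Fin (H + 1)) → ι → ℤ := fun a i => (a i : ℕ)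
  let box : (ι → Fin (H + 1)) → κ → Fin m := fun a k =>
    ⟨⌊Int.fract (L (lift a) k) * m⌋₊, (Nat.floor_lt (by positivity)).2 <| by
      simpa using mul_lt_mul_of_pos_right (Int.fract_lt_one (L (lift a) k)) hm'⟩
  obtain ⟨a, b, hab, hbox⟩ := Fintype.exists_ne_map_eq_of_card_lt box (by simpa using hcard)
  refine ⟨lift a - lift b, fun h => hab (funext fun i => Fin.ext ?_), fun i => ?_,
    fun k => ⌊L (lift a) k⌋ - ⌊L (lift b) k⌋, fun k => ?_⟩
  · simpa [lift, sub_eq_zero] using congrFun h i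
  · have := (a i).is_le
    have := (b i).is_le
    simp only [lift, Pi.sub_apply, abs_le]
    omega
  · have hfloor : ⌊Int.fract (L (lift a) k) * m⌋ = ⌊Int.fract (L (lift b) k) * m⌋ := by
      have hk := congrArg (fun c => ((c k : ℕ) : ℤ)) hbox
      simp only [box] at hk
      rwa [Int.natCast_floor_eq_floor (by positivity),
        Int.natCast_floor_eq_floor (by positivity)] at hk
    have := Int.abs_sub_lt_one_of_floor_eq_floor hfloor
    rw [← sub_mul, abs_mul, abs_of_pos hm', ← lt_div_iff₀ hm'] at this
    rw [map_sub, Pi.sub_apply]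
    push_cast
    rwa [← Int.self_sub_floor, ← Int.self_sub_floor, sub_sub_sub_comm] at this

theorem Set.infinite_of_forall_exists_lt_of_pos {α : Type*} {s : Set α} {f : α → ℝ}
    (hf : ∀ x ∈ s, 0 < f x) (h : ∀ ε > 0, ∃ x ∈ s, f x < ε) : s.Infinite := by
  intro hs
  obtain ⟨x, hx, -⟩ := h 1 one_pos
  obtain ⟨x₀, hx₀, hmin⟩ := Set.exists_min_image s f hs ⟨x, hx⟩
  obtain ⟨x, hx, hlt⟩ := h (f x₀) (hf x₀ hx₀)
  exact (hmin x hx).not_gt hlt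

theorem eventually_div_le_mul_rpow_rpow_neg {β C ω : ℝ} (hC : 0 < C)
    (hβω : β * ω < 1) : ∀ᶠ m : ℕ in atTop, C / m ≤ (C * (m : ℝ) ^ β) ^ (-ω) := by
  have hlarge : ∀ᶠ m : ℕ in atTop, C ^ (1 + ω) ≤ (m : ℝ) ^ (1 - β * ω) :=
    ((tendsto_rpow_atTop (by linarith)).comp tendsto_natCast_atTop_atTop).eventually_ge_atTop _
  filter_upwards [hlarge, eventually_gt_atTop 0] with m hm hm0
  have hm0 : (0 : ℝ) < m := by exact_mod_cast hm0
  calc C / m = C ^ (1 + ω) * C ^ (-ω) / m := by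
        rw [← Real.rpow_add hC, add_neg_cancel_right, Real.rpow_one]
    _ ≤ (m : ℝ) ^ (1 - β * ω) * C ^ (-ω) / m := by gcongr
    _ = (C * (m : ℝ) ^ β) ^ (-ω) := by
        rw [Real.mul_rpow hC.le (by positivity), ← Real.rpow_mul hm0.le, mul_div_right_comm,
          ← Real.rpow_sub_one hm0.ne']
        ring_nf

theorem infinite_setOf_le_rpow_neg {α : Type*} {s : Set α} {f g : α → ℝ} {β C ω : ℝ}
    (hβω : β * ω < 1) (hf : ∀ x ∈ s, 0 < f x) (hg : ∀ x ∈ s, 1 ≤ g x)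
    (h : ∀ m : ℕ, 0 < m → ∃ x ∈ s, g x ≤ C * m ^ β ∧ f x ≤ C / m) :
    {x ∈ s | f x ≤ g x ^ (-ω)}.Infinite := by
  have hC : 0 < C := by
    obtain ⟨x, hx, hgx, -⟩ := h 1 one_pos
    rw [Nat.cast_one, Real.one_rpow, mul_one] at hgx
    linarith [hg x hx]
  have hgood : ∀ᶠ m : ℕ in atTop, ∃ x ∈ {x ∈ s | f x ≤ g x ^ (-ω)}, f x ≤ C / m := by
    rcases le_or_gt ω 0 with hω | hω
    · filter_upwards [tendsto_natCast_atTop_atTop.eventually_ge_atTop C,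
        eventually_gt_atTop 0] with m hm hm0
      obtain ⟨x, hx, -, hfx⟩ := h m hm0
      refine ⟨x, ⟨hx, hfx.trans ?_⟩, hfx⟩
      calc C / m ≤ 1 := div_le_one_of_le₀ hm (Nat.cast_nonneg m)
        _ ≤ g x ^ (-ω) := Real.one_le_rpow (hg x hx) (by linarith)
    · filter_upwards [eventually_div_le_mul_rpow_rpow_neg hC hβω,
        eventually_gt_atTop 0] with m hm hm0
      obtain ⟨x, hx, hgx, hfx⟩ := h m hm0
      refine ⟨x, ⟨hx, ?_⟩, hfx⟩
      calc f x ≤ C / m := hfx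
        _ ≤ (C * (m : ℝ) ^ β) ^ (-ω) := hm
        _ ≤ g x ^ (-ω) :=
          Real.rpow_le_rpow_of_nonpos (by linarith [hg x hx]) hgx (by linarith)
  refine Set.infinite_of_forall_exists_lt_of_pos (fun x hx => hf x hx.1) fun ε hε => ?_
  obtain ⟨m, hm, hCm⟩ := (hgood.and (tendsto_const_div_atTop_nhds_zero_nat C |>.eventually
    (gt_mem_nhds hε))).exists
  obtain ⟨x, hx, hfx⟩ := hm
  exact ⟨x, hx, hfx.trans_lt hCm⟩

section Multivectors

variable {n r : ℕ}

def wedgeSign (T : Finset (Fin (n + 1))) (i : Fin (n + 1)) : ℝ :=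
  (-1) ^ #(T.filter (· < i))

/-- Extension by zero of a multivector to all subsets, so that coordinates such as
`T.erase i` can be used without a cardinality proof. -/
def mvExtend (X : MultiVec n r) (S : Finset (Fin (n + 1))) : ℝ :=
  if h : S.card = r then X ⟨S, h⟩ else 0

theorem mvExtend_of_card (X : MultiVec n r) {S : Finset (Fin (n + 1))} (h : S.card = r) :
    mvExtend X S = X ⟨S, h⟩ :=
  dif_pos h

theorem one_le_sum_abs {y : Fin (n + 1) → ℝ} (hy : y 0 = 1) : 1 ≤ ∑ i, |y i| := by
  simpa [hy] using single_le_sum (fun i _ => abs_nonneg (y i)) (mem_univ 0)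

theorem vWedge_apply (y : Fin (n + 1) → ℝ) (X : MultiVec n r)
    (T : {S : Finset (Fin (n + 1)) // S.card = r + 1}) :
    vWedge y X T = ∑ i ∈ T.1, wedgeSign T.1 i * y i * mvExtend X (T.1.erase i) := by
  rw [vWedge, ← sum_attach T.1]
  refine sum_congr rfl fun i _ => ?_
  rw [wedgeSign, mvExtend_of_card]

theorem wedgeSign_zero (T : Finset (Fin (n + 1))) : wedgeSign T 0 = 1 := by
  simp [wedgeSign]

theorem abs_wedgeSign (T : Finset (Fin (n + 1))) (i : Fin (n + 1)) : |wedgeSign T i| = 1 := by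
  simp [wedgeSign]

theorem wedgeSign_mul_wedgeSign_erase_of_lt {T : Finset (Fin (n + 1))} {i j : Fin (n + 1)}
    (hi : i ∈ T) (hij : i < j) :
    wedgeSign T i * wedgeSign (T.erase i) j = -(wedgeSign T j * wedgeSign (T.erase j) i) := by
  have hmem : i ∈ T.filter (· < j) := mem_filter.2 ⟨hi, hij⟩
  have hj : (T.erase j).filter (· < i) = T.filter (· < i) := by
    rw [filter_erase, erase_eq_of_notMem fun h => (mem_filter.1 h).2.asymm hij]
  have hi : (T.erase i).filter (· < j) = (T.filter (· < j)).erase i := filter_erase ..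
  obtain ⟨c, hc⟩ := Nat.exists_eq_add_of_lt (card_pos.2 ⟨i, hmem⟩)
  rw [wedgeSign, wedgeSign, wedgeSign, wedgeSign, hj, hi, card_erase_of_mem hmem, hc]
  simp only [zero_add, Nat.add_sub_cancel, pow_succ]
  ring

theorem wedgeSign_mul_wedgeSign_erase {T : Finset (Fin (n + 1))} {i j : Fin (n + 1)}
    (hi : i ∈ T) (hj : j ∈ T) (hij : i ≠ j) :
    wedgeSign T i * wedgeSign (T.erase i) j = -(wedgeSign T j * wedgeSign (T.erase j) i) := by
  rcases hij.lt_or_gt with h | h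
  · exact wedgeSign_mul_wedgeSign_erase_of_lt hi h
  · rw [wedgeSign_mul_wedgeSign_erase_of_lt hj h, neg_neg]

theorem vWedge_vWedge (y : Fin (n + 1) → ℝ) (X : MultiVec n r) : vWedge y (vWedge y X) = 0 := by
  funext T
  set F : Fin (n + 1) → Fin (n + 1) → ℝ := fun i j =>
    wedgeSign T.1 i * wedgeSign (T.1.erase i) j * (y i * y j * mvExtend X ((T.1.erase i).erase j))
  have hexpand : vWedge y (vWedge y X) T = ∑ i ∈ T.1, ∑ j ∈ T.1.erase i, F i j := by
    rw [vWedge_apply]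
    refine sum_congr rfl fun i hi => ?_
    have hc : (T.1.erase i).card = r + 1 := by rw [card_erase_of_mem hi, T.2]; rfl
    rw [mvExtend_of_card _ hc, vWedge_apply y X ⟨_, hc⟩, mul_sum]
    exact sum_congr rfl fun j _ => by ring
  -- the double sum is invariant under the swap `(i, j) ↦ (j, i)`, which changes the sign of `F`
  have hanti : ∑ i ∈ T.1, ∑ j ∈ T.1.erase i, F i j = -∑ i ∈ T.1, ∑ j ∈ T.1.erase i, F i j := by
    calc ∑ i ∈ T.1, ∑ j ∈ T.1.erase i, F i j = ∑ i ∈ T.1, ∑ j ∈ T.1.erase i, F j i :=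
          sum_comm' fun i j => by simp only [mem_erase]; tauto
      _ = ∑ i ∈ T.1, ∑ j ∈ T.1.erase i, -F i j := by
          refine sum_congr rfl fun i hi => sum_congr rfl fun j hj => ?_
          obtain ⟨hji, hj⟩ := mem_erase.1 hj
          simp only [F, erase_right_comm (a := i),
            wedgeSign_mul_wedgeSign_erase hj hi hji]
          ring
      _ = _ := by simp only [sum_neg_distrib]
  rw [hexpand, Pi.zero_apply]
  linarith

theorem card_subsets_notMem_zero (k : ℕ) :
    Fintype.card {S : Finset (Fin (n + 1)) // S.card = k ∧ 0 ∉ S} = n.choose k := by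
  have : univ.filter (fun S : Finset (Fin (n + 1)) => S.card = k ∧ 0 ∉ S) =
      (univ.erase 0).powersetCard k := by
    ext S
    simp [mem_powersetCard, subset_erase, and_comm]
  rw [Fintype.card_subtype, this, card_powersetCard, card_erase_of_mem (mem_univ _), card_univ,
    Fintype.card_fin, Nat.add_sub_cancel]

theorem card_subsets_mem_zero (k : ℕ) :
    Fintype.card {S : Finset (Fin (n + 1)) // S.card = k + 1 ∧ 0 ∈ S} = n.choose k := by
  have hsplit := card_filter_add_card_filter_not (s := univ.filter
    (fun S : Finset (Fin (n + 1)) => S.card = k + 1)) (fun S => 0 ∈ S)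
  have hnot := card_subsets_notMem_zero (n := n) (k + 1)
  rw [Fintype.card_subtype] at hnot ⊢
  rw [filter_filter, filter_filter, univ_filter_card_eq, card_powersetCard, card_univ,
    Fintype.card_fin, Nat.choose_succ_succ'] at hsplit
  omega

theorem mvNorm_pos {X : MultiVec n r} (hX : X ≠ 0) : 0 < mvNorm X := by
  obtain ⟨S, hS⟩ := Function.ne_iff.1 hX
  rw [mvNorm, Real.sqrt_pos]
  exact (pow_pos (abs_pos.2 hS) 2).trans_le <| (sq_abs (X S)).symm ▸
    single_le_sum (fun S _ => sq_nonneg (X S)) (mem_univ S)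

theorem one_le_mvNorm {X : MultiVec n r} (hint : mvIntegral X) (hX : X ≠ 0) : 1 ≤ mvNorm X := by
  obtain ⟨S, hS⟩ := Function.ne_iff.1 hX
  obtain ⟨k, hk⟩ := hint S
  have hk0 : k ≠ 0 := by rintro rfl; simp [hk] at hS
  have h1 : (1 : ℝ) ≤ X S ^ 2 := by
    rw [hk]
    exact_mod_cast one_le_sq_iff_one_le_abs _ |>.2 (Int.one_le_abs hk0)
  rw [mvNorm, Real.one_le_sqrt]
  exact h1.trans (single_le_sum (fun S _ => sq_nonneg (X S)) (mem_univ S))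

theorem mvNorm_le_of_forall_abs_le {X : MultiVec n r} {B : ℝ} (hB : 0 ≤ B)
    (h : ∀ S, |X S| ≤ B) :
    mvNorm X ≤ √(Fintype.card {S : Finset (Fin (n + 1)) // S.card = r}) * B := by
  rw [mvNorm, ← Real.sqrt_sq hB, ← Real.sqrt_mul (Nat.cast_nonneg _)]
  refine Real.sqrt_le_sqrt ?_
  calc ∑ S, X S ^ 2 ≤ ∑ _S : {S : Finset (Fin (n + 1)) // S.card = r}, B ^ 2 :=
        sum_le_sum fun S _ => sq_le_sq' (abs_le.1 (h S)).1 (abs_le.1 (h S)).2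
    _ = _ := by rw [sum_const, card_univ, nsmul_eq_mul]

theorem exists_int_mvExtend_eq {X : MultiVec n r} (hX : mvIntegral X)
    (S : Finset (Fin (n + 1))) : ∃ k : ℤ, mvExtend X S = k := by
  by_cases h : S.card = r
  · rw [mvExtend_of_card X h]
    exact hX _
  · exact ⟨0, by simp [mvExtend, h]⟩

/-- A coordinate `(y ∧ Z)_{S ∪ {j}}` is a relation with integer coefficients between the `y i`
in which `y j` has coefficient `± Z_S`. -/
theorem vWedge_ne_zero {y : Fin (n + 1) → ℝ} (hy : LinearIndependent ℚ y) (hr : r ≤ n)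
    {Z : MultiVec n r} (hint : mvIntegral Z) (hZ : Z ≠ 0) : vWedge y Z ≠ 0 := by
  obtain ⟨⟨S, hS⟩, hZS⟩ := Function.ne_iff.1 hZ
  obtain ⟨j, hj⟩ : ∃ j, j ∉ S := by
    by_contra! h
    have := card_le_card (s := univ) fun i _ => h i
    simp only [card_univ, Fintype.card_fin] at this
    omega
  have hT : (insert j S).card = r + 1 := by rw [card_insert_of_notMem hj, hS]
  have hcoeff : ∀ i, ∃ q : ℤ, wedgeSign (insert j S) i * mvExtend Z ((insert j S).erase i) = q := by
    intro i
    obtain ⟨k, hk⟩ := exists_int_mvExtend_eq hint ((insert j S).erase i)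
    exact ⟨(-1) ^ #((insert j S).filter (· < i)) * k, by simp [wedgeSign, hk]⟩
  choose q hq using hcoeff
  intro hw
  have hrel : ∑ i ∈ insert j S, (q i : ℚ) • y i = 0 := by
    have := congrFun hw ⟨insert j S, hT⟩
    rw [vWedge_apply, Pi.zero_apply] at this
    rw [← this]
    refine sum_congr rfl fun i _ => ?_
    rw [Rat.smul_def, Rat.cast_intCast, ← hq]
    ring
  have hqj := linearIndependent_iff'.1 hy _ _ hrel j (mem_insert_self j S)
  rw [Int.cast_eq_zero] at hqj
  have := hq j
  rw [hqj, Int.cast_zero, erase_insert hj, mvExtend_of_card Z hS] at this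
  exact hZS ((mul_eq_zero.1 this).resolve_left (by simp [wedgeSign]))

theorem vWedge_add (y : Fin (n + 1) → ℝ) (X X' : MultiVec n r) :
    vWedge y (X + X') = vWedge y X + vWedge y X' := by
  funext T
  simp only [vWedge, Pi.add_apply, mul_add, sum_add_distrib]

theorem vWedge_sub (y : Fin (n + 1) → ℝ) (X X' : MultiVec n r) :
    vWedge y (X - X') = vWedge y X - vWedge y X' := by
  funext T
  simp only [vWedge, Pi.sub_apply, mul_sub, sum_sub_distrib]

theorem vWedge_insert_zero (y : Fin (n + 1) → ℝ) (W : MultiVec n r) {V : Finset (Fin (n + 1))}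
    (hV : 0 ∉ V) (hcV : V.card = r) :
    vWedge y W ⟨insert 0 V, by rw [card_insert_of_notMem hV, hcV]⟩ = y 0 * W ⟨V, hcV⟩ +
      ∑ i ∈ V, wedgeSign (insert 0 V) i * y i * mvExtend W ((insert 0 V).erase i) := by
  rw [vWedge_apply, sum_insert hV, wedgeSign_zero, erase_insert hV, mvExtend_of_card _ hcV,
    one_mul]

theorem zero_mem_erase_insert_zero {V : Finset (Fin (n + 1))} {i : Fin (n + 1)} (hV : 0 ∉ V)
    (hi : i ∈ V) : 0 ∈ (insert 0 V).erase i :=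
  mem_erase.2 ⟨fun h => hV (h ▸ hi), mem_insert_self 0 V⟩

theorem card_erase_insert_zero {V : Finset (Fin (n + 1))} {i : Fin (n + 1)} (hV : 0 ∉ V)
    (hcV : V.card = r) (hi : i ∈ V) : ((insert 0 V).erase i).card = r := by
  rw [card_erase_of_mem (mem_insert_of_mem hi), card_insert_of_notMem hV, hcV, Nat.add_sub_cancel]

def mvOfMem (x : {S : Finset (Fin (n + 1)) // S.card = r ∧ 0 ∈ S} → ℤ) : MultiVec n r :=
  fun S => if h : 0 ∈ S.1 then (x ⟨S.1, S.2, h⟩ : ℝ) else 0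

def mvOfNotMem (p : {S : Finset (Fin (n + 1)) // S.card = r ∧ 0 ∉ S} → ℤ) : MultiVec n r :=
  fun S => if h : 0 ∈ S.1 then 0 else (p ⟨S.1, S.2, h⟩ : ℝ)

theorem mvOfMem_add (x x' : {S : Finset (Fin (n + 1)) // S.card = r ∧ 0 ∈ S} → ℤ) :
    mvOfMem (x + x') = mvOfMem x + mvOfMem x' := by
  funext S
  by_cases h : 0 ∈ S.1 <;> simp [mvOfMem, h]

theorem vWedge_mvOfNotMem_insert_zero (y : Fin (n + 1) → ℝ)
    (p : {S : Finset (Fin (n + 1)) // S.card = r ∧ 0 ∉ S} → ℤ) {V : Finset (Fin (n + 1))}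
    (hV : 0 ∉ V) (hcV : V.card = r) :
    vWedge y (mvOfNotMem p) ⟨insert 0 V, by rw [card_insert_of_notMem hV, hcV]⟩ =
      y 0 * p ⟨V, hcV, hV⟩ := by
  rw [vWedge_insert_zero y _ hV hcV, sum_eq_zero, add_zero]
  · simp [mvOfNotMem, hV]
  · intro i hi
    simp [mvExtend, mvOfNotMem, zero_mem_erase_insert_zero hV hi]

def wedgeForms (y : Fin (n + 1) → ℝ) :
    ({S : Finset (Fin (n + 1)) // S.card = r ∧ 0 ∈ S} → ℤ) →+
      ({S : Finset (Fin (n + 1)) // S.card = r ∧ 0 ∉ S} → ℝ) :=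
  AddMonoidHom.mk' (fun x V => vWedge y (mvOfMem x)
      ⟨insert 0 V.1, by rw [card_insert_of_notMem V.2.2, V.2.1]⟩)
    fun x x' => by
      funext V
      simp only [mvOfMem_add, vWedge_add, Pi.add_apply]

theorem exists_integral_abs_vWedge_le (y : Fin (n + 1) → ℝ) (hy : y 0 = 1) {m H : ℕ}
    (hm : 0 < m)
    (hcard : m ^ Fintype.card {S : Finset (Fin (n + 1)) // S.card = r ∧ 0 ∉ S} <
      (H + 1) ^ Fintype.card {S : Finset (Fin (n + 1)) // S.card = r ∧ 0 ∈ S}) :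
    ∃ Z : MultiVec n r, mvIntegral Z ∧ Z ≠ 0 ∧ (∀ S, 0 ∈ S.1 → |Z S| ≤ H) ∧
      ∀ T, 0 ∈ T.1 → |vWedge y Z T| ≤ 1 / m := by
  obtain ⟨x, hx0, hxH, p, hp⟩ := exists_ne_zero_abs_sub_lt_of_pow_card_lt (wedgeForms y) hm hcard
  have hmem : ∀ S (h : 0 ∈ S.1), (mvOfMem x - mvOfNotMem p) S = x ⟨S.1, S.2, h⟩ := by
    intro S h
    simp [mvOfMem, mvOfNotMem, h]
  refine ⟨mvOfMem x - mvOfNotMem p, fun S => ?_, fun hZ => hx0 ?_, fun S hS => ?_,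
    fun ⟨T, hT⟩ h0 => ?_⟩
  · by_cases h : 0 ∈ S.1
    · exact ⟨_, hmem S h⟩
    · exact ⟨-p ⟨S.1, S.2, h⟩, by simp [mvOfMem, mvOfNotMem, h]⟩
  · funext S
    simpa [hmem ⟨S.1, S.2.1⟩ S.2.2] using congrFun hZ ⟨S.1, S.2.1⟩
  · rw [hmem S hS]
    exact_mod_cast hxH _
  · obtain ⟨V, hV, rfl⟩ : ∃ V, 0 ∉ V ∧ insert 0 V = T :=
      ⟨T.erase 0, notMem_erase 0 T, insert_erase h0⟩
    have hcV : V.card = r := by rw [card_insert_of_notMem hV] at hT; omega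
    rw [vWedge_sub, Pi.sub_apply, vWedge_mvOfNotMem_insert_zero y p hV hcV, hy, one_mul]
    exact (hp ⟨V, hcV, hV⟩).le

theorem abs_apply_le_of_abs_vWedge_le {y : Fin (n + 1) → ℝ} (hy : y 0 = 1) {W : MultiVec n r}
    {B ε : ℝ} (hB0 : 0 ≤ B) (hε0 : 0 ≤ ε) (hB : ∀ S, 0 ∈ S.1 → |W S| ≤ B)
    (hε : ∀ T, 0 ∈ T.1 → |vWedge y W T| ≤ ε) (S : {S : Finset (Fin (n + 1)) // S.card = r}) :
    |W S| ≤ ε + (∑ i, |y i|) * B := by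
  have hY := one_le_sum_abs hy
  by_cases hS : 0 ∈ S.1
  · nlinarith [hB S hS]
  obtain ⟨S, hc⟩ := S
  set R := ∑ i ∈ S, wedgeSign (insert 0 S) i * y i * mvExtend W ((insert 0 S).erase i)
  have hT := hε ⟨insert 0 S, by rw [card_insert_of_notMem hS, hc]⟩ (mem_insert_self 0 S)
  rw [vWedge_insert_zero y W hS hc, hy, one_mul] at hT
  have hR : |R| ≤ (∑ i, |y i|) * B :=
    calc |R| ≤ ∑ i ∈ S, |wedgeSign (insert 0 S) i * y i * mvExtend W ((insert 0 S).erase i)| :=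
          abs_sum_le_sum_abs _ _
      _ ≤ ∑ i ∈ S, |y i| * B := sum_le_sum fun i hi => by
          rw [abs_mul, abs_mul, abs_wedgeSign, one_mul,
            mvExtend_of_card W (card_erase_insert_zero hS hc hi)]
          exact mul_le_mul_of_nonneg_left (hB _ (zero_mem_erase_insert_zero hS hi)) (abs_nonneg _)
      _ ≤ (∑ i, |y i|) * B := by
          rw [← sum_mul]
          gcongr
          exact subset_univ S
  calc |W ⟨S, hc⟩| = |(W ⟨S, hc⟩ + R) - R| := by rw [add_sub_cancel_right]
    _ ≤ |W ⟨S, hc⟩ + R| + |R| := abs_sub _ _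
    _ ≤ ε + (∑ i, |y i|) * B := add_le_add hT hR

theorem pow_choose_lt_ceil_rpow_add_one_pow {d m : ℕ} (hd : d ≤ n) (hm : 0 < m) :
    m ^ n.choose (d + 1) < (⌈(m : ℝ) ^ (((n : ℝ) - d) / (d + 1))⌉₊ + 1) ^ n.choose d := by
  set β : ℝ := ((n : ℝ) - d) / (d + 1)
  have hβ : (n.choose (d + 1) : ℝ) = β * n.choose d := by
    have h := congrArg (Nat.cast : ℕ → ℝ) (Nat.choose_succ_right_eq n d)
    push_cast [Nat.cast_sub hd] at h
    rw [div_mul_eq_mul_div, eq_div_iff (by positivity)]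
    linarith
  have hpow : (m : ℝ) ^ n.choose (d + 1) = ((m : ℝ) ^ β) ^ n.choose d := by
    rw [← Real.rpow_natCast, hβ, Real.rpow_mul (Nat.cast_nonneg m), Real.rpow_natCast]
  have hlt : (m : ℝ) ^ n.choose (d + 1) <
      ((⌈(m : ℝ) ^ β⌉₊ : ℝ) + 1) ^ n.choose d := by
    rw [hpow]
    exact pow_lt_pow_left₀ ((Nat.le_ceil _).trans_lt (lt_add_one _)) (by positivity)
      (Nat.choose_pos hd).ne'
  exact_mod_cast hlt

theorem exists_integral_mvNorm_le_mvNorm_vWedge_le {y : Fin (n + 1) → ℝ} (hy : y 0 = 1)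
    {d : ℕ} (hd : d ≤ n) :
    ∃ C : ℝ, ∀ m : ℕ, 0 < m → ∃ Z : MultiVec n (d + 1), mvIntegral Z ∧ Z ≠ 0 ∧
      mvNorm Z ≤ C * (m : ℝ) ^ (((n : ℝ) - d) / (d + 1)) ∧ mvNorm (vWedge y Z) ≤ C / m := by
  set β : ℝ := ((n : ℝ) - d) / (d + 1)
  set Y := ∑ i, |y i|
  have hY : 1 ≤ Y := one_le_sum_abs hy
  set a := √(Fintype.card {S : Finset (Fin (n + 1)) // S.card = d + 1})
  set b := √(Fintype.card {S : Finset (Fin (n + 1)) // S.card = d + 1 + 1})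
  have ha : 0 ≤ a := Real.sqrt_nonneg _
  have hb : 0 ≤ b := Real.sqrt_nonneg _
  refine ⟨3 * Y * (a + b), fun m hm => ?_⟩
  have hm1 : (1 : ℝ) ≤ m := by exact_mod_cast hm
  have hmβ : 1 ≤ (m : ℝ) ^ β :=
    Real.one_le_rpow hm1 (div_nonneg (by simpa using hd) (by positivity))
  have hH : (⌈(m : ℝ) ^ β⌉₊ : ℝ) ≤ (m : ℝ) ^ β + 1 := (Nat.ceil_lt_add_one (by positivity)).le
  obtain ⟨Z, hint, hZ0, hZH, hwZ⟩ := exists_integral_abs_vWedge_le y hy hm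
    (H := ⌈(m : ℝ) ^ β⌉₊) (by
      rw [card_subsets_notMem_zero, card_subsets_mem_zero]
      exact pow_choose_lt_ceil_rpow_add_one_pow hd hm)
  have hZ := abs_apply_le_of_abs_vWedge_le hy (Nat.cast_nonneg _) (by positivity) hZH hwZ
  have hwZ' := abs_apply_le_of_abs_vWedge_le hy (by positivity) le_rfl hwZ
    fun T _ => by simp [vWedge_vWedge]
  refine ⟨Z, hint, hZ0, ?_, ?_⟩
  · calc mvNorm Z ≤ a * (1 / m + Y * ⌈(m : ℝ) ^ β⌉₊) :=
          mvNorm_le_of_forall_abs_le (by positivity) hZ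
      _ ≤ a * (3 * Y * (m : ℝ) ^ β) := by
          gcongr
          have : 1 / (m : ℝ) ≤ 1 := by rw [div_le_one (by positivity)]; exact hm1
          nlinarith
      _ ≤ 3 * Y * (a + b) * (m : ℝ) ^ β := by
          nlinarith [mul_nonneg (by positivity : (0 : ℝ) ≤ 3 * Y) (by positivity : 0 ≤ (m : ℝ) ^ β)]
  · calc mvNorm (vWedge y Z) ≤ b * (0 + Y * (1 / m)) :=
          mvNorm_le_of_forall_abs_le (by positivity) hwZ'
      _ ≤ 3 * Y * (a + b) / m := by
          rw [zero_add, mul_one_div, mul_div_assoc', div_le_div_iff_of_pos_right (by positivity)]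
          nlinarith

end Multivectors

/-- **Corollary 2.** For `Θ ∈ ℝⁿ` with `1, θ₁, …, θₙ` linearly independent over `ℚ` and
`0 ≤ d ≤ n - 1`: `ω_d(Θ) ≥ (d+1)/(n-d)`. -/
theorem corollary2_dirichlet (n : ℕ) (hn : 0 < n) (θ : Fin n → ℝ)
    (hθ : LinearIndependent ℚ (Fin.cons (1 : ℝ) θ))
    (d : ℕ) (hd : d ≤ n - 1) :
    ((((d : ℝ) + 1) / ((n : ℝ) - (d : ℝ)) : ℝ) : EReal) ≤ omegaExp n θ d := by
  have hdn : d + 1 ≤ n := by omega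
  obtain ⟨C, hC⟩ :=
    exists_integral_mvNorm_le_mvNorm_vWedge_le (y := yTheta θ) rfl (Nat.le_of_succ_le hdn)
  by_contra! h
  obtain ⟨ω, hω, hωd⟩ := EReal.exists_between_coe_real h
  have hβω : ((n : ℝ) - d) / (d + 1) * ω < 1 := by
    have hnd : (0 : ℝ) < n - d := sub_pos.2 (by exact_mod_cast hdn)
    calc ((n : ℝ) - d) / (d + 1) * ω < ((n : ℝ) - d) / (d + 1) * ((d + 1) / (n - d)) :=
          mul_lt_mul_of_pos_left (EReal.coe_lt_coe_iff.1 hωd) (by positivity)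
      _ = 1 := by field_simp
  have hinf := infinite_setOf_le_rpow_neg (s := {X : MultiVec n (d + 1) | mvIntegral X ∧ X ≠ 0})
    hβω (fun X hX => mvNorm_pos (vWedge_ne_zero hθ hdn hX.1 hX.2))
    (fun X hX => one_le_mvNorm hX.1 hX.2)
    fun m hm => (hC m hm).imp fun Z hZ => ⟨⟨hZ.1, hZ.2.1⟩, hZ.2.2⟩
  exact hω.not_ge (le_sSup ⟨ω, rfl, hinf.mono fun X hX => ⟨hX.1.1, hX.1.2, hX.2⟩⟩)
end
end

section
/- (Lemma 4, duality.) Let d be an integer with 0 ≤ d ≤ n − 1 and let ω be a real number. There exist infinitely many nonzero integer multivectors X ∈ Λ^{n−d}(ℤ^{n+1}) with |y ⌟ X| ≤ |X|^{−ω} if and only if there exist infinitely many nonzero integer multivectors X' ∈ Λ^{d+1}(ℤ^{n+1}) with |y ∧ X'| ≤ |X'|^{−ω}. Consequently, ω_d(Θ) equals the supremum (in ℝ ∪ {+∞}) of the real numbers ω for which there exist infinitely many nonzero integer multivectors X ∈ Λ^{n−d}(ℤ^{n+1}) with |y ⌟ X| ≤ |X|^{−ω}. -/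
open scoped BigOperators Pointwise

noncomputable section

/-!
The Hodge star `⋆`, whose coordinate at an index set `S` is, up to sign, the coordinate of `X`
at the complement of `S`, is an isometry `Λ^a(ℝ^{n+1}) → Λ^{n+1-a}(ℝ^{n+1})` which preserves
integrality and intertwines the two operations up to signs: `|y ∧ ⋆Z| = |y ⌟ Z|`. Together with
`⋆⋆ = ±1` this makes `⋆` map the solutions of each approximation problem injectively into the
solutions of the other one.
-/

namespace MultiVec

variable {n a b r : ℕ}

def complEquiv (h : a + b = n + 1) :
    {S : Finset (Fin (n + 1)) // S.card = a} ≃ {S : Finset (Fin (n + 1)) // S.card = b} where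
  toFun S := ⟨S.1ᶜ, by rw [Finset.card_compl, S.2, Fintype.card_fin]; omega⟩
  invFun S := ⟨S.1ᶜ, by rw [Finset.card_compl, S.2, Fintype.card_fin]; omega⟩
  left_inv S := Subtype.ext (compl_compl _)
  right_inv S := Subtype.ext (compl_compl _)

def hodgeStar (h : a + b = n + 1) (X : MultiVec n a) : MultiVec n b :=
  fun S => (-1 : ℝ) ^ (∑ s ∈ S.1, s.val) * X ((complEquiv h).symm S)

def approxSet {s : ℕ} (F : MultiVec n r → MultiVec n s) (ω : ℝ) : Set (MultiVec n r) :=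
  {X | mvIntegral X ∧ X ≠ 0 ∧ mvNorm (F X) ≤ mvNorm X ^ (-ω)}

lemma mvNorm_congr_of_abs_eq {X : MultiVec n b} {Y : MultiVec n a}
    (e : {S : Finset (Fin (n + 1)) // S.card = a} ≃ {S : Finset (Fin (n + 1)) // S.card = b})
    (hXY : ∀ S, |X (e S)| = |Y S|) : mvNorm X = mvNorm Y := by
  unfold mvNorm
  rw [← e.sum_comp]
  simp_rw [← sq_abs (X _), hXY, sq_abs]

lemma mvNorm_neg_one_pow_smul (k : ℕ) (X : MultiVec n r) :
    mvNorm ((-1 : ℝ) ^ k • X) = mvNorm X :=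
  mvNorm_congr_of_abs_eq (Equiv.refl _) fun S => by simp

lemma mvNorm_hodgeStar (h : a + b = n + 1) (X : MultiVec n a) :
    mvNorm (hodgeStar h X) = mvNorm X :=
  mvNorm_congr_of_abs_eq (complEquiv h) fun S => by simp [hodgeStar]

lemma mvIntegral_hodgeStar (h : a + b = n + 1) {X : MultiVec n a} (hX : mvIntegral X) :
    mvIntegral (hodgeStar h X) := by
  intro S
  obtain ⟨k, hk⟩ := hX ((complEquiv h).symm S)
  exact ⟨(-1) ^ (∑ s ∈ S.1, s.val) * k, by simp [hodgeStar, hk]⟩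

lemma hodgeStar_hodgeStar (h : a + b = n + 1) (h' : b + a = n + 1) (X : MultiVec n a) :
    hodgeStar h' (hodgeStar h X) = (-1 : ℝ) ^ (∑ i : Fin (n + 1), i.val) • X := by
  funext S
  have hS : (complEquiv h).symm ((complEquiv h').symm S) = S := Subtype.ext (compl_compl _)
  simp only [hodgeStar, hS, Pi.smul_apply, smul_eq_mul, ← mul_assoc, ← pow_add]
  rw [← Finset.sum_add_sum_compl S.1]
  rfl

lemma hodgeStar_injective (h : a + b = n + 1) :
    Function.Injective (hodgeStar h : MultiVec n a → MultiVec n b) := by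
  intro X Y hXY
  have h' : b + a = n + 1 := by omega
  have := congrArg (hodgeStar h') hXY
  rw [hodgeStar_hodgeStar, hodgeStar_hodgeStar] at this
  exact smul_right_injective _ (pow_ne_zero _ (neg_ne_zero.mpr one_ne_zero)) this

lemma hodgeStar_ne_zero (h : a + b = n + 1) {X : MultiVec n a} (hX : X ≠ 0) :
    hodgeStar h X ≠ 0 := by
  have hzero : hodgeStar h (0 : MultiVec n a) = 0 := by funext S; simp [hodgeStar]
  exact hzero ▸ (hodgeStar_injective h).ne hX

lemma vWedge_smul (y : Fin (n + 1) → ℝ) (c : ℝ) (X : MultiVec n r) :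
    vWedge y (c • X) = c • vWedge y X := by
  funext T
  simp only [vWedge, Pi.smul_apply, smul_eq_mul, Finset.mul_sum]
  exact Finset.sum_congr rfl fun _ _ => by ring

lemma card_filter_add_card_filter_compl {α : Type*} [Fintype α] [DecidableEq α] (s : Finset α)
    (p : α → Prop) [DecidablePred p] :
    (s.filter p).card + (sᶜ.filter p).card = (Finset.univ.filter p).card := by
  rw [← Finset.card_union_of_disjoint (Finset.disjoint_filter_filter disjoint_compl_right),
    ← Finset.filter_union, Finset.union_compl]

lemma neg_one_pow_wedge_sign {S : Finset (Fin (n + 1))} {i : Fin (n + 1)} (hi : i ∉ S) :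
    (-1 : ℝ) ^ ((Sᶜ.filter (· < i)).card + ∑ s ∈ Sᶜ.erase i, s.val) =
      (-1 : ℝ) ^ (∑ s ∈ Sᶜ, s.val + S.card + (S.filter (i < ·)).card) := by
  have hsum : ∑ s ∈ Sᶜ.erase i, s.val + i.val = ∑ s ∈ Sᶜ, s.val :=
    Finset.sum_erase_add _ _ (Finset.mem_compl.mpr hi)
  have hbelow : (S.filter (· < i)).card + (Sᶜ.filter (· < i)).card = i.val := by
    rw [card_filter_add_card_filter_compl, Finset.filter_gt_eq_Iio, Fin.card_Iio]
  have hsplit : (S.filter (i < ·)).card + (S.filter (· < i)).card = S.card := by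
    rw [← Finset.card_union_of_disjoint, ← Finset.filter_or, Finset.filter_true_of_mem]
    · exact fun j hj => (lt_or_gt_of_ne fun e : j = i => hi (e ▸ hj)).symm
    · exact Finset.disjoint_filter.mpr fun j _ h1 h2 => lt_asymm h1 h2
  rw [neg_one_pow_eq_pow_mod_two, neg_one_pow_eq_pow_mod_two (R := ℝ) (_ + _ + _)]
  congr 1
  omega

lemma vWedge_hodgeStar (h : (r + 1) + b = n + 1) (y : Fin (n + 1) → ℝ) (Z : MultiVec n (r + 1))
    (S : {S : Finset (Fin (n + 1)) // S.card = r}) :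
    vWedge y (hodgeStar h Z) (complEquiv (by omega) S) =
      (-1 : ℝ) ^ (∑ s ∈ S.1ᶜ, s.val + S.1.card) * vContract y Z S := by
  show vWedge y (hodgeStar h Z) ⟨S.1ᶜ, _⟩ = _
  simp only [vWedge, vContract, hodgeStar, Finset.mul_sum]
  refine Finset.sum_congr rfl fun i _ => ?_
  have hi : i.1 ∉ S.1 := Finset.mem_compl.mp i.2
  have hZ : ∀ {P Q : {T : Finset (Fin (n + 1)) // T.card = r + 1}}, P.1 = Q.1 → Z P = Z Q :=
    fun e => congrArg Z (Subtype.ext e)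
  rw [hZ (Q := ⟨insert i.1 S.1, by rw [Finset.card_insert_of_notMem hi, S.2]⟩)]
  · linear_combination (y i * Z ⟨insert i.1 S.1, by rw [Finset.card_insert_of_notMem hi, S.2]⟩) *
      neg_one_pow_wedge_sign hi
  · exact Finset.compl_erase.trans (congrArg _ (compl_compl _))

lemma mvNorm_vWedge_hodgeStar (h : (r + 1) + b = n + 1) (y : Fin (n + 1) → ℝ)
    (Z : MultiVec n (r + 1)) : mvNorm (vWedge y (hodgeStar h Z)) = mvNorm (vContract y Z) :=
  mvNorm_congr_of_abs_eq (complEquiv (show r + (b + 1) = n + 1 by omega)) fun S => by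
    simp [vWedge_hodgeStar h]

lemma mvNorm_vContract_hodgeStar (h : b + (r + 1) = n + 1) (y : Fin (n + 1) → ℝ)
    (X : MultiVec n b) : mvNorm (vContract y (hodgeStar h X)) = mvNorm (vWedge y X) := by
  rw [← mvNorm_vWedge_hodgeStar (show (r + 1) + b = n + 1 by omega), hodgeStar_hodgeStar,
    vWedge_smul, mvNorm_neg_one_pow_smul]

lemma infinite_approxSet_of_hodgeStar {s t : ℕ} (h : a + b = n + 1)
    {F : MultiVec n a → MultiVec n s} {G : MultiVec n b → MultiVec n t}
    (hGF : ∀ X, mvNorm (G (hodgeStar h X)) = mvNorm (F X)) {ω : ℝ}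
    (hF : (approxSet F ω).Infinite) : (approxSet G ω).Infinite :=
  Set.infinite_of_injOn_mapsTo (hodgeStar_injective h).injOn
    (fun _ hX => ⟨mvIntegral_hodgeStar h hX.1, hodgeStar_ne_zero h hX.2.1,
      by rw [hGF, mvNorm_hodgeStar]; exact hX.2.2⟩) hF

theorem infinite_approxSet_vContract_iff (h : (r + 1) + b = n + 1) (y : Fin (n + 1) → ℝ)
    (ω : ℝ) :
    (approxSet (vContract y : MultiVec n (r + 1) → _) ω).Infinite ↔
      (approxSet (vWedge y : MultiVec n b → _) ω).Infinite :=
  ⟨infinite_approxSet_of_hodgeStar h (mvNorm_vWedge_hodgeStar h y),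
    infinite_approxSet_of_hodgeStar (by omega) (mvNorm_vContract_hodgeStar (by omega) y)⟩

end MultiVec

theorem lemma4_duality_general (n : ℕ) (θ : Fin n → ℝ)
    (d m : ℕ) (hm : m + 1 = n - d) :
    (∀ ω : ℝ,
      {X : MultiVec n (m + 1) | mvIntegral X ∧ X ≠ 0 ∧
        mvNorm (vContract (yTheta θ) X) ≤ mvNorm X ^ (-ω)}.Infinite ↔
      {X' : MultiVec n (d + 1) | mvIntegral X' ∧ X' ≠ 0 ∧
        mvNorm (vWedge (yTheta θ) X') ≤ mvNorm X' ^ (-ω)}.Infinite) ∧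
    omegaExp n θ d
      = sSup {w : EReal | ∃ ω : ℝ, w = (ω : EReal) ∧
          {X : MultiVec n (m + 1) | mvIntegral X ∧ X ≠ 0 ∧
            mvNorm (vContract (yTheta θ) X) ≤ mvNorm X ^ (-ω)}.Infinite} := by
  have duality :=
    MultiVec.infinite_approxSet_vContract_iff (r := m) (b := d + 1) (by omega) (yTheta θ)
  refine ⟨duality, ?_⟩
  unfold omegaExp
  congr 1
  ext w
  exact exists_congr fun ω => and_congr_right' (duality ω).symm

/-- **Lemma 4 (duality).** For `Θ ∈ ℝⁿ` with `1, θ₁, …, θₙ` linearly independent over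
`ℚ`, `0 ≤ d ≤ n - 1`, and `n - d = m + 1`: for every real `ω`, there are infinitely many
nonzero integer multivectors `X ∈ Λ^{n-d}(ℤ^{n+1})` with `|y ⌟ X| ≤ |X|^{-ω}` if and
only if there are infinitely many nonzero integer multivectors `X' ∈ Λ^{d+1}(ℤ^{n+1})`
with `|y ∧ X'| ≤ |X'|^{-ω}`. Consequently `ω_d(Θ)` is the supremum of the real `ω`
admitting infinitely many nonzero integer `X ∈ Λ^{n-d}(ℤ^{n+1})` with `|y ⌟ X| ≤ |X|^{-ω}`. -/
theorem lemma4_duality (n : ℕ) (hn : 0 < n) (θ : Fin n → ℝ)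
    (hθ : LinearIndependent ℚ (Fin.cons (1 : ℝ) θ))
    (d m : ℕ) (hd : d ≤ n - 1) (hm : m + 1 = n - d) :
    (∀ ω : ℝ,
      {X : MultiVec n (m + 1) | mvIntegral X ∧ X ≠ 0 ∧
        mvNorm (vContract (yTheta θ) X) ≤ mvNorm X ^ (-ω)}.Infinite ↔
      {X' : MultiVec n (d + 1) | mvIntegral X' ∧ X' ≠ 0 ∧
        mvNorm (vWedge (yTheta θ) X') ≤ mvNorm X' ^ (-ω)}.Infinite) ∧
    omegaExp n θ d
      = sSup {w : EReal | ∃ ω : ℝ, w = (ω : EReal) ∧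
          {X : MultiVec n (m + 1) | mvIntegral X ∧ X ≠ 0 ∧
            mvNorm (vContract (yTheta θ) X) ≤ mvNorm X ^ (-ω)}.Infinite} :=
  lemma4_duality_general n θ d m hm
end
end
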